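/- arXiv:2206.02276 — 10 statements merged into one kernel-verified Lean document; each statement's English description precedes it below -/
import Mathlib

section
/- The lattice points of the restricted Birkhoff polytope B_n^k (the n×n doubly stochastic matrices with every monotone lattice path sum from (1,1) to (n,n) at most k) are exactly the permutation matrices of permutations in S_n whose longest increasing subsequence has length at most k. -/
open scoped BigOperators

/-- A monotone lattice path in the `n × n` grid from `(0,0)` to `(n-1,n-1)` (0-indexed),
with `2n-1` entries `p 0, p 1, …, p (2n-2)`, each step moving down or right. -/
def IsLatticePath (n : ℕ) (p : ℕ → ℕ × ℕ) : Prop :=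
  p 0 = (0, 0) ∧ p (2 * n - 2) = (n - 1, n - 1) ∧
    ∀ i, i < 2 * n - 2 →
      p (i + 1) = ((p i).1 + 1, (p i).2) ∨ p (i + 1) = ((p i).1, (p i).2 + 1)

/-- Entry of a matrix at a ℕ-indexed position (0 outside the index range). -/
def ent {n : ℕ} (X : Matrix (Fin n) (Fin n) ℝ) (q : ℕ × ℕ) : ℝ :=
  if h : q.1 < n ∧ q.2 < n then X ⟨q.1, h.1⟩ ⟨q.2, h.2⟩ else 0

/-- Sum of matrix entries along a lattice path. -/
def pathSum {n : ℕ} (X : Matrix (Fin n) (Fin n) ℝ) (p : ℕ → ℕ × ℕ) : ℝ :=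
  ∑ i ∈ Finset.range (2 * n - 1), ent X (p i)

/-- Membership in the restricted Birkhoff polytope `B_n^k`: doubly stochastic with
all monotone lattice path sums at most `k`. -/
def InRestrictedBirkhoff (n k : ℕ) (X : Matrix (Fin n) (Fin n) ℝ) : Prop :=
  (∀ i j, 0 ≤ X i j) ∧ (∀ i, ∑ j, X i j = 1) ∧ (∀ j, ∑ i, X i j = 1) ∧
    ∀ p : ℕ → ℕ × ℕ, IsLatticePath n p → pathSum X p ≤ k

/-- A real matrix with all entries integers. -/
def IsIntegerMatrix {n : ℕ} (X : Matrix (Fin n) (Fin n) ℝ) : Prop :=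
  ∀ i j, ∃ m : ℤ, X i j = (m : ℝ)

/-! An integer doubly stochastic matrix is a permutation matrix `X_w`. The cells of a lattice
path form a chain for the product order on `ℕ × ℕ`, and a set of cells `(a, w a)` is a chain
exactly when its rows form an increasing subsequence of `w`; hence every path sum of `X_w` counts
an increasing subsequence. Conversely an increasing subsequence is a chain of cells, and a chain
is threaded by the lattice path that, on each antidiagonal, stays in the least row from which all
later cells of the chain remain reachable. -/

open Finset Matrix

lemma eq_zero_of_nonneg_of_sum_eq_apply {ι R : Type*} [Fintype ι] [DecidableEq ι]
    [AddCommGroup R] [PartialOrder R] [IsOrderedAddMonoid R] {v : ι → R} (hv : ∀ i, 0 ≤ v i)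
    {i : ι} (hsum : ∑ j, v j = v i) {j : ι} (hji : j ≠ i) : v j = 0 := by
  have h := add_sum_erase univ v (mem_univ i)
  rw [hsum, add_eq_left] at h
  exact (sum_eq_zero_iff_of_nonneg fun k _ => hv k).1 h j (mem_erase.2 ⟨hji, mem_univ j⟩)

lemma exists_perm_eq_permMatrix_of_mem_doublyStochastic {ι R : Type*} [Fintype ι]
    [DecidableEq ι] [Ring R] [PartialOrder R] [IsOrderedRing R] [Nontrivial R]
    {M : Matrix ι ι R} (hM : M ∈ doublyStochastic R ι)
    (h01 : ∀ i j, M i j = 0 ∨ M i j = 1) :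
    ∃ σ : Equiv.Perm ι, M = σ.permMatrix R := by
  have hrow := sum_row_of_mem_doublyStochastic hM
  have hcol := sum_col_of_mem_doublyStochastic hM
  have hone : ∀ i, ∃ j, M i j = 1 := by
    intro i
    by_contra! h
    have := hrow i
    rw [sum_eq_zero fun j _ => (h01 i j).resolve_right (h j)] at this
    exact zero_ne_one this
  choose f hf using hone
  have hinj : Function.Injective f := by
    intro i i' hii'
    by_contra hne
    have h0 : M i' (f i) = 0 :=
      eq_zero_of_nonneg_of_sum_eq_apply (fun _ => nonneg_of_mem_doublyStochastic hM)
        ((hcol (f i)).trans (hf i).symm) (Ne.symm hne)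
    rw [hii', hf i'] at h0
    exact one_ne_zero h0
  refine ⟨Equiv.ofBijective f (Finite.injective_iff_bijective.1 hinj), ?_⟩
  ext i j
  simp only [Equiv.Perm.permMatrix, PEquiv.toMatrix_apply, Equiv.toPEquiv_apply,
    Equiv.ofBijective_apply, Option.mem_def, Option.some.injEq]
  split_ifs with hj
  · exact hj ▸ hf i
  · exact eq_zero_of_nonneg_of_sum_eq_apply (fun _ => nonneg_of_mem_doublyStochastic hM)
      ((hrow i).trans (hf i).symm) (Ne.symm hj)

lemma IsIntegerMatrix.eq_zero_or_eq_one {n : ℕ} {X : Matrix (Fin n) (Fin n) ℝ}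
    (hX : IsIntegerMatrix X) (hM : X ∈ doublyStochastic ℝ (Fin n)) (i j : Fin n) :
    X i j = 0 ∨ X i j = 1 := by
  obtain ⟨m, hm⟩ := hX i j
  have h0 : (0 : ℝ) ≤ m := hm ▸ nonneg_of_mem_doublyStochastic hM
  have h1 : (m : ℝ) ≤ 1 := hm ▸ le_one_of_mem_doublyStochastic hM
  have : m = 0 ∨ m = 1 := by
    have : 0 ≤ m := by exact_mod_cast h0
    have : m ≤ 1 := by exact_mod_cast h1
    omega
  rcases this with rfl | rfl <;> simp [hm]

lemma isIntegerMatrix_permMatrix {n : ℕ} (w : Equiv.Perm (Fin n)) :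
    IsIntegerMatrix (w.permMatrix ℝ) := fun i j =>
  ⟨if w i = j then 1 else 0, by simp [PEquiv.toMatrix_apply, apply_ite]⟩

def pathCells (n : ℕ) (p : ℕ → ℕ × ℕ) : Finset (ℕ × ℕ) :=
  (range (2 * n - 1)).image p

namespace IsLatticePath

variable {n : ℕ} {p : ℕ → ℕ × ℕ}

lemma fst_add_snd (hp : IsLatticePath n p) {i : ℕ} (hi : i < 2 * n - 1) :
    (p i).1 + (p i).2 = i := by
  induction i with
  | zero => simp [hp.1]
  | succ i ih =>
    rcases hp.2.2 i (by omega) with h | h <;> rw [h] <;> dsimp only <;> omega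

lemma le_of_le (hp : IsLatticePath n p) {i j : ℕ} (hij : i ≤ j) (hj : j < 2 * n - 1) :
    p i ≤ p j := by
  induction j, hij using Nat.le_induction with
  | base => exact le_rfl
  | succ j _ ih =>
    refine (ih (by omega)).trans ?_
    rcases hp.2.2 j (by omega) with h | h <;> rw [h, Prod.mk_le_mk] <;> omega

lemma injOn (hp : IsLatticePath n p) : Set.InjOn p (range (2 * n - 1)) :=
  fun i hi j hj hij => by
    rw [← hp.fst_add_snd (mem_range.1 hi), ← hp.fst_add_snd (mem_range.1 hj), hij]

lemma isChain_pathCells (hp : IsLatticePath n p) :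
    IsChain (· ≤ ·) (pathCells n p : Set (ℕ × ℕ)) := by
  rintro _ hpi _ hpj -
  obtain ⟨i, hi, rfl⟩ := mem_image.1 hpi
  obtain ⟨j, hj, rfl⟩ := mem_image.1 hpj
  rcases le_total i j with hij | hji
  · exact Or.inl (hp.le_of_le hij (mem_range.1 hj))
  · exact Or.inr (hp.le_of_le hji (mem_range.1 hi))

lemma pathSum_eq_sum_pathCells (hp : IsLatticePath n p) (X : Matrix (Fin n) (Fin n) ℝ) :
    pathSum X p = ∑ q ∈ pathCells n p, ent X q :=
  (sum_image hp.injOn).symm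

end IsLatticePath

lemma isLatticePath_of_row {n : ℕ} {r : ℕ → ℕ} (h0 : r 0 = 0)
    (hmono : ∀ i, r i ≤ r (i + 1)) (hstep : ∀ i, r (i + 1) ≤ r i + 1)
    (hend : r (2 * n - 2) = n - 1) :
    IsLatticePath n fun i => (r i, i - r i) := by
  have hle : ∀ i, r i ≤ i := fun i => by
    induction i with
    | zero => omega
    | succ i ih => have := hstep i; omega
  refine ⟨by simp [h0], Prod.ext hend (by dsimp only; omega), fun i _ => ?_⟩
  have := hle i
  rcases (by have := hmono i; have := hstep i; omega : r (i + 1) = r i + 1 ∨ r (i + 1) = r i)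
    with h | h
  · exact Or.inl (Prod.ext h (by dsimp only; omega))
  · exact Or.inr (Prod.ext h (by dsimp only; omega))

/-- `pathRow D i` is the least row from which every cell `q ∈ D` on a later antidiagonal
`q.1 + q.2 ≥ i` can still be reached by a monotone path. -/
def pathRow (D : Finset (ℕ × ℕ)) (i : ℕ) : ℕ :=
  D.sup fun q => q.1 - (q.1 + q.2 - i)

lemma pathRow_zero (D : Finset (ℕ × ℕ)) : pathRow D 0 = 0 :=
  Nat.le_zero.1 <| Finset.sup_le fun q _ => by omega

lemma pathRow_le_succ (D : Finset (ℕ × ℕ)) (i : ℕ) : pathRow D i ≤ pathRow D (i + 1) :=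
  sup_mono_fun fun q _ => by omega

lemma pathRow_succ_le (D : Finset (ℕ × ℕ)) (i : ℕ) : pathRow D (i + 1) ≤ pathRow D i + 1 :=
  Finset.sup_le fun q hq => by
    have : q.1 - (q.1 + q.2 - i) ≤ pathRow D i := le_sup (f := fun q => q.1 - (q.1 + q.2 - i)) hq
    omega

lemma pathRow_eq_fst {D : Finset (ℕ × ℕ)} (hD : IsChain (· ≤ ·) (D : Set (ℕ × ℕ)))
    {q : ℕ × ℕ} (hq : q ∈ D) : pathRow D (q.1 + q.2) = q.1 := by
  have hle : q.1 - (q.1 + q.2 - (q.1 + q.2)) ≤ pathRow D (q.1 + q.2) :=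
    le_sup (f := fun q' => q'.1 - (q'.1 + q'.2 - (q.1 + q.2))) hq
  refine le_antisymm (Finset.sup_le fun q' hq' => ?_) (by simpa using hle)
  rcases eq_or_ne q' q with rfl | hne
  · omega
  rcases hD hq' hq hne with h | h <;> rw [Prod.le_def] at h <;> omega

lemma exists_isLatticePath_subset_pathCells {n : ℕ} {C : Finset (ℕ × ℕ)}
    (hC : IsChain (· ≤ ·) (C : Set (ℕ × ℕ))) (hbound : ∀ q ∈ C, q.1 < n ∧ q.2 < n) :
    ∃ p, IsLatticePath n p ∧ C ⊆ pathCells n p := by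
  set D := insert (n - 1, n - 1) C
  have hD : IsChain (· ≤ ·) (D : Set (ℕ × ℕ)) := by
    rw [coe_insert]
    refine hC.insert fun q hq _ => Or.inr ?_
    have := hbound q hq
    exact Prod.mk_le_mk.2 ⟨by omega, by omega⟩
  have hend : pathRow D (2 * n - 2) = n - 1 := by
    simpa [show n - 1 + (n - 1) = 2 * n - 2 by omega] using pathRow_eq_fst hD (mem_insert_self _ C)
  have hpath : IsLatticePath n fun i => (pathRow D i, i - pathRow D i) :=
    isLatticePath_of_row (pathRow_zero D) (pathRow_le_succ D) (pathRow_succ_le D) hend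
  refine ⟨_, hpath, fun q hq => mem_image.2 ⟨q.1 + q.2, ?_, ?_⟩⟩
  · have := hbound q hq
    exact mem_range.2 (by omega)
  · rw [pathRow_eq_fst hD (mem_insert_of_mem hq)]
    exact Prod.ext rfl (by simp)

section Permutation

variable {n : ℕ} (w : Equiv.Perm (Fin n))

def permCell (a : Fin n) : ℕ × ℕ := (a, w a)

lemma isChain_image_permCell_iff {s : Set (Fin n)} :
    IsChain (· ≤ ·) (permCell w '' s) ↔ StrictMonoOn w s := by
  constructor
  · intro hs a ha b hb hab
    have hne : permCell w a ≠ permCell w b := fun h => hab.ne (Fin.ext (Prod.ext_iff.1 h).1)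
    rcases hs (Set.mem_image_of_mem _ ha) (Set.mem_image_of_mem _ hb) hne with h | h <;>
      simp only [permCell, Prod.mk_le_mk] at h
    · exact lt_of_le_of_ne (Fin.le_def.2 h.2) (w.injective.ne hab.ne)
    · exact absurd h.1 (not_le.2 hab)
  · rintro hw _ ⟨a, ha, rfl⟩ _ ⟨b, hb, rfl⟩ -
    rcases le_total a b with hab | hba
    · exact Or.inl (Prod.mk_le_mk.2 ⟨hab, hw.monotoneOn ha hb hab⟩)
    · exact Or.inr (Prod.mk_le_mk.2 ⟨hba, hw.monotoneOn hb ha hba⟩)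

lemma ent_permMatrix (q : ℕ × ℕ) :
    ent (w.permMatrix ℝ) q = ∑ a, if permCell w a = q then 1 else 0 := by
  unfold ent
  split_ifs with hq
  · rw [sum_eq_single ⟨q.1, hq.1⟩
      (fun a _ ha => if_neg fun h => ha (Fin.ext (by simp [← h, permCell]))) (by simp)]
    simp [permCell, PEquiv.toMatrix_apply, Prod.ext_iff, Fin.ext_iff]
  · refine (sum_eq_zero fun a _ => if_neg ?_).symm
    rintro rfl
    exact hq ⟨a.2, (w a).2⟩

lemma pathSum_permMatrix {p : ℕ → ℕ × ℕ} (hp : IsLatticePath n p) :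
    pathSum (w.permMatrix ℝ) p = #{a | permCell w a ∈ pathCells n p} := by
  rw [hp.pathSum_eq_sum_pathCells]
  simp_rw [ent_permMatrix]
  rw [sum_comm]
  simp

theorem forall_pathSum_permMatrix_le_iff (k : ℕ) :
    (∀ p, IsLatticePath n p → pathSum (w.permMatrix ℝ) p ≤ k) ↔
      ∀ s : Finset (Fin n), StrictMonoOn w s → #s ≤ k := by
  constructor
  · intro h s hs
    obtain ⟨p, hp, hsub⟩ :=
      exists_isLatticePath_subset_pathCells (n := n) (C := s.image (permCell w))
        (by rwa [coe_image, isChain_image_permCell_iff]) (by simp [permCell])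
    have hcard : #s ≤ #{a | permCell w a ∈ pathCells n p} :=
      card_le_card fun a ha => mem_filter.2 ⟨mem_univ a, hsub (mem_image_of_mem _ ha)⟩
    exact_mod_cast (Nat.cast_le.2 hcard).trans (pathSum_permMatrix w hp ▸ h p hp)
  · intro h p hp
    rw [pathSum_permMatrix w hp, Nat.cast_le]
    refine h _ ((isChain_image_permCell_iff w).1 (hp.isChain_pathCells.mono ?_))
    rintro _ ⟨a, ha, rfl⟩
    exact (mem_filter.1 ha).2

end Permutation

theorem latticePoints_restrictedBirkhoff_general (n k : ℕ) (X : Matrix (Fin n) (Fin n) ℝ) :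
    (InRestrictedBirkhoff n k X ∧ IsIntegerMatrix X) ↔
      ∃ w : Equiv.Perm (Fin n),
        (∀ i j, X i j = if w i = j then 1 else 0) ∧
        ∀ s : Finset (Fin n), (∀ a ∈ s, ∀ b ∈ s, a < b → w a < w b) → s.card ≤ k := by
  have entries_iff (w : Equiv.Perm (Fin n)) :
      (∀ i j, X i j = if w i = j then 1 else 0) ↔ X = w.permMatrix ℝ := by
    simp [← Matrix.ext_iff, PEquiv.toMatrix_apply]
  simp_rw [entries_iff]
  constructor
  · rintro ⟨⟨h0, hrow, hcol, hpath⟩, hint⟩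
    have hM := mem_doublyStochastic_iff_sum.2 ⟨h0, hrow, hcol⟩
    obtain ⟨w, rfl⟩ :=
      exists_perm_eq_permMatrix_of_mem_doublyStochastic hM (hint.eq_zero_or_eq_one hM)
    exact ⟨w, rfl, (forall_pathSum_permMatrix_le_iff w k).1 hpath⟩
  · rintro ⟨w, rfl, hlis⟩
    obtain ⟨h0, hrow, hcol⟩ :=
      mem_doublyStochastic_iff_sum.1 (permMatrix_mem_doublyStochastic (R := ℝ) (σ := w))
    exact ⟨⟨h0, hrow, hcol, (forall_pathSum_permMatrix_le_iff w k).2 hlis⟩,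
      isIntegerMatrix_permMatrix w⟩

/-- The lattice points of `B_n^k` are exactly the permutation matrices of permutations
whose longest increasing subsequence has length at most `k`. -/
theorem latticePoints_restrictedBirkhoff (n k : ℕ) (hk : 1 ≤ k) (hkn : k ≤ n)
    (X : Matrix (Fin n) (Fin n) ℝ) :
    (InRestrictedBirkhoff n k X ∧ IsIntegerMatrix X) ↔
      ∃ w : Equiv.Perm (Fin n),
        (∀ i j, X i j = if w i = j then 1 else 0) ∧
        ∀ s : Finset (Fin n), (∀ a ∈ s, ∀ b ∈ s, a < b → w a < w b) → s.card ≤ k :=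
  latticePoints_restrictedBirkhoff_general n k X
end

section
/- For k = 1, the restricted Birkhoff polytope B_n^1 consists of exactly one point, namely the permutation matrix of the reverse permutation w_0 = n, n−1, ..., 2, 1. -/
open scoped BigOperators

namespace RBAux

open Finset Matrix

variable {n : ℕ}

lemma ent_nonneg {X : Matrix (Fin n) (Fin n) ℝ} (hpos : ∀ i j, 0 ≤ X i j) (q : ℕ × ℕ) :
    0 ≤ ent X q := by
  unfold ent
  split
  · exact hpos _ _
  · exact le_refl 0

lemma ent_coe (X : Matrix (Fin n) (Fin n) ℝ) (i j : Fin n) :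
    ent X ((i : ℕ), (j : ℕ)) = X i j := by
  simp [ent, i.isLt, j.isLt]

lemma ent_swap (X : Matrix (Fin n) (Fin n) ℝ) (q : ℕ × ℕ) :
    ent Xᵀ q = ent X q.swap := by
  rcases q with ⟨i, j⟩
  by_cases hi : i < n <;> by_cases hj : j < n <;>
    simp [ent, hi, hj, Matrix.transpose_apply]

lemma row_sum_ent {X : Matrix (Fin n) (Fin n) ℝ} (hrow : ∀ i, ∑ j, X i j = 1)
    {i : ℕ} (hi : i < n) :
    ∑ c ∈ range n, ent X (i, c) = 1 := by
  rw [← Fin.sum_univ_eq_sum_range (fun c => ent X (i, c)) n, ← hrow ⟨i, hi⟩]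
  refine Finset.sum_congr rfl fun j _ => ?_
  simp [ent, hi, j.isLt]

lemma col_sum_ent {X : Matrix (Fin n) (Fin n) ℝ} (hcol : ∀ j, ∑ i, X i j = 1)
    {j : ℕ} (hj : j < n) :
    ∑ r ∈ range n, ent X (r, j) = 1 := by
  rw [← Fin.sum_univ_eq_sum_range (fun r => ent X (r, j)) n, ← hcol ⟨j, hj⟩]
  refine Finset.sum_congr rfl fun i _ => ?_
  simp [ent, hj, i.isLt]

/-- Hook path: down column 0 to row `a`, right along row `a` to column `b`,
down column `b` to row `n-1`, right along row `n-1`. -/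
def hookPath (n a b : ℕ) : ℕ → ℕ × ℕ := fun t =>
  if t ≤ a then (t, 0)
  else if t ≤ a + b then (a, t - a)
  else if t ≤ b + n - 1 then (t - b, b)
  else (n - 1, t + 1 - n)

lemma hookPath_lattice (hn : 1 ≤ n) {a b : ℕ} (ha : a < n) (hb : b < n) :
    IsLatticePath n (hookPath n a b) := by
  refine ⟨?_, ?_, ?_⟩
  · simp [hookPath]
  · unfold hookPath
    split_ifs <;> (try simp) <;> omega
  · intro t ht
    unfold hookPath
    split_ifs <;> (try simp) <;> omega

lemma hookPath_eval1 {a b c : ℕ} (hc : c ≤ b) : hookPath n a b (a + c) = (a, c) := by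
  unfold hookPath
  split_ifs <;> (try simp) <;> omega

lemma hookPath_eval2 (hn : 1 ≤ n) {a b r : ℕ} (har : a < r) (hr : r < n) :
    hookPath n a b (b + r) = (r, b) := by
  unfold hookPath
  split_ifs <;> (try simp) <;> omega

lemma L1 {X : Matrix (Fin n) (Fin n) ℝ} (hyp : InRestrictedBirkhoff n 1 X) (hn : 1 ≤ n)
    {a b : ℕ} (ha : a < n) (hb : b < n) :
    ∑ c ∈ range (b + 1), ent X (a, c) + ∑ r ∈ Ico (a + 1) n, ent X (r, b) ≤ 1 := by
  obtain ⟨hpos, hrow, hcol, hpath⟩ := hyp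
  have hp := hpath _ (hookPath_lattice hn ha hb)
  rw [Nat.cast_one] at hp
  have hsub : ∑ t ∈ Ico a (b + n), ent X (hookPath n a b t) ≤ pathSum X (hookPath n a b) := by
    unfold pathSum
    apply sum_le_sum_of_subset_of_nonneg
    · intro t ht
      simp only [mem_Ico, mem_range] at *
      omega
    · intro t _ _
      exact ent_nonneg hpos _
  have hsplit : ∑ t ∈ Ico a (b + n), ent X (hookPath n a b t)
      = ∑ t ∈ Ico a (a + b + 1), ent X (hookPath n a b t)
        + ∑ t ∈ Ico (a + b + 1) (b + n), ent X (hookPath n a b t) :=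
    (sum_Ico_consecutive _ (by omega) (by omega)).symm
  have h1 : ∑ t ∈ Ico a (a + b + 1), ent X (hookPath n a b t)
      = ∑ c ∈ range (b + 1), ent X (a, c) := by
    rw [Finset.sum_Ico_eq_sum_range]
    have hd : a + b + 1 - a = b + 1 := by omega
    rw [hd]
    refine sum_congr rfl fun c hc => ?_
    rw [hookPath_eval1 (by simp only [mem_range] at hc; omega)]
  have h2 : ∑ t ∈ Ico (a + b + 1) (b + n), ent X (hookPath n a b t)
      = ∑ r ∈ Ico (a + 1) n, ent X (r, b) := by
    rw [Finset.sum_Ico_eq_sum_range, Finset.sum_Ico_eq_sum_range]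
    have hd : b + n - (a + b + 1) = n - (a + 1) := by omega
    rw [hd]
    refine sum_congr rfl fun s hs => ?_
    simp only [mem_range] at hs
    have he : a + b + 1 + s = b + (a + 1 + s) := by omega
    rw [he, hookPath_eval2 hn (by omega) (by omega)]
  linarith

lemma swap_lattice {p : ℕ → ℕ × ℕ} (hp : IsLatticePath n p) :
    IsLatticePath n (fun t => (p t).swap) := by
  obtain ⟨h0, h1, hstep⟩ := hp
  refine ⟨by simp [h0], by simp [h1], fun i hi => ?_⟩
  rcases hstep i hi with h | h
  · right; simp [h]
  · left; simp [h]

lemma transpose_mem {X : Matrix (Fin n) (Fin n) ℝ} (h : InRestrictedBirkhoff n 1 X) :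
    InRestrictedBirkhoff n 1 Xᵀ := by
  obtain ⟨hpos, hrow, hcol, hpath⟩ := h
  refine ⟨fun i j => hpos j i, fun i => ?_, fun j => ?_, fun p hp => ?_⟩
  · simpa [Matrix.transpose_apply] using hcol i
  · simpa [Matrix.transpose_apply] using hrow j
  · have he : pathSum Xᵀ p = pathSum X (fun t => (p t).swap) := by
      unfold pathSum
      exact sum_congr rfl fun t _ => ent_swap X (p t)
    rw [he]
    exact hpath _ (swap_lattice hp)

lemma keyE {X : Matrix (Fin n) (Fin n) ℝ} (hyp : InRestrictedBirkhoff n 1 X) (hn : 1 ≤ n)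
    {a b : ℕ} (ha : a < n) (hb : b < n) :
    ∑ c ∈ range (b + 1), ent X (a, c) = ∑ r ∈ range (a + 1), ent X (r, b) := by
  have l1 := L1 hyp hn ha hb
  have l2 := L1 (transpose_mem hyp) hn hb ha
  simp only [ent_swap, Prod.swap_prod_mk] at l2
  have hc : ∑ r ∈ range (a + 1), ent X (r, b) + ∑ r ∈ Ico (a + 1) n, ent X (r, b) = 1 := by
    rw [Finset.sum_range_add_sum_Ico _ (by omega)]
    exact col_sum_ent hyp.2.2.1 hb
  have hr : ∑ c ∈ range (b + 1), ent X (a, c) + ∑ c ∈ Ico (b + 1) n, ent X (a, c) = 1 := by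
    rw [Finset.sum_range_add_sum_Ico _ (by omega)]
    exact row_sum_ent hyp.2.1 ha
  linarith

lemma gval {X : Matrix (Fin n) (Fin n) ℝ} (hyp : InRestrictedBirkhoff n 1 X) (hn : 1 ≤ n) :
    ∀ a, a < n → ∀ b, b < n →
      ∑ c ∈ range (b + 1), ent X (a, c) = if n - 1 ≤ a + b then 1 else 0 := by
  have row0 : ∀ c, c < n → c ≠ n - 1 → ent X (0, c) = 0 := by
    have e := keyE hyp hn (a := 0) (b := n - 1) (by omega) (by omega)
    rw [show n - 1 + 1 = n by omega, Finset.sum_range_one] at e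
    have hrow := row_sum_ent hyp.2.1 (show (0 : ℕ) < n by omega)
    have hval : ent X (0, n - 1) = 1 := by rw [← e]; exact hrow
    intro c hc hc'
    have hmem : c ∈ (range n).erase (n - 1) := by
      simp only [mem_erase, mem_range]
      exact ⟨hc', hc⟩
    have h2 : ∑ x ∈ (range n).erase (n - 1), ent X (0, x) + ent X (0, n - 1) = 1 := by
      rw [Finset.sum_erase_add (range n) _ (by simp only [mem_range]; omega)]
      exact hrow
    have hsum : ∑ x ∈ (range n).erase (n - 1), ent X (0, x) = 0 := by linarith
    exact (Finset.sum_eq_zero_iff_of_nonneg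
      (fun x _ => ent_nonneg hyp.1 _)).mp hsum c hmem
  intro a
  induction a with
  | zero =>
    intro _ b hb
    by_cases hb' : b = n - 1
    · subst hb'
      rw [show n - 1 + 1 = n by omega, row_sum_ent hyp.2.1 (by omega), if_pos (by omega)]
    · rw [Finset.sum_eq_zero fun c hc =>
        row0 c (by simp only [mem_range] at hc; omega) (by simp only [mem_range] at hc; omega),
        if_neg (by omega)]
  | succ a ih =>
    intro ha b hb
    have ha' : a < n := by omega
    by_cases hb' : b = n - 1
    · subst hb'
      rw [show n - 1 + 1 = n by omega, row_sum_ent hyp.2.1 ha, if_pos (by omega)]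
    · have hb1 : b + 1 < n := by omega
      have eA := keyE hyp hn ha hb1
      have eB := keyE hyp hn ha' hb1
      have s1 : ∑ r ∈ range (a + 1 + 1), ent X (r, b + 1)
          = ∑ r ∈ range (a + 1), ent X (r, b + 1) + ent X (a + 1, b + 1) :=
        Finset.sum_range_succ _ _
      have s2 : ∑ c ∈ range (b + 1 + 1), ent X (a + 1, c)
          = ∑ c ∈ range (b + 1), ent X (a + 1, c) + ent X (a + 1, b + 1) :=
        Finset.sum_range_succ _ _
      have ihv := ih ha' (b + 1) hb1
      have hgoal : ∑ c ∈ range (b + 1), ent X (a + 1, c)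
          = ∑ c ∈ range (b + 1 + 1), ent X (a, c) := by linarith
      rw [hgoal, ihv]
      split_ifs <;> first | rfl | omega

lemma ent_val {X : Matrix (Fin n) (Fin n) ℝ} (hyp : InRestrictedBirkhoff n 1 X) (hn : 1 ≤ n)
    {a b : ℕ} (ha : a < n) (hb : b < n) :
    ent X (a, b) = if a + b = n - 1 then 1 else 0 := by
  cases b with
  | zero =>
    have h := gval hyp hn a ha 0 (by omega)
    rw [Finset.sum_range_one] at h
    rw [h]
    split_ifs <;> first | rfl | omega
  | succ b' =>
    have h1 := gval hyp hn a ha (b' + 1) hb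
    have h2 := gval hyp hn a ha b' (by omega)
    rw [Finset.sum_range_succ, h2] at h1
    by_cases hc : a + (b' + 1) = n - 1
    · rw [if_pos hc]
      rw [if_neg (by omega), if_pos (by omega)] at h1
      linarith
    · rw [if_neg hc]
      by_cases hd : n - 1 ≤ a + b'
      · rw [if_pos hd, if_pos (by omega)] at h1
        linarith
      · rw [if_neg hd, if_neg (by omega)] at h1
        linarith

end RBAux

/-- `B_n^1` consists of exactly one point: the permutation matrix of the reverse
permutation `w₀ = n, n-1, …, 1` (the antidiagonal matrix). -/
theorem restrictedBirkhoff_one (n : ℕ) (hn : 1 ≤ n) (X : Matrix (Fin n) (Fin n) ℝ) :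
    InRestrictedBirkhoff n 1 X ↔
      (∀ i j, X i j = if (i : ℕ) + (j : ℕ) = n - 1 then 1 else 0) := by
  constructor
  · intro hyp i j
    have h := RBAux.ent_val hyp hn i.isLt j.isLt
    rwa [RBAux.ent_coe] at h
  · intro hX
    refine ⟨?_, ?_, ?_, ?_⟩
    · intro i j
      rw [hX]
      split_ifs <;> norm_num
    · intro i
      simp only [hX]
      rw [Finset.sum_eq_single (⟨n - 1 - (i : ℕ), by omega⟩ : Fin n)]
      · rw [if_pos]
        show (i : ℕ) + (n - 1 - (i : ℕ)) = n - 1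
        have := i.isLt
        omega
      · intro j _ hj
        rw [if_neg]
        intro hcon
        apply hj
        apply Fin.ext
        show (j : ℕ) = n - 1 - (i : ℕ)
        have := j.isLt
        have := i.isLt
        omega
      · intro h
        exact absurd (Finset.mem_univ _) h
    · intro j
      simp only [hX]
      rw [Finset.sum_eq_single (⟨n - 1 - (j : ℕ), by omega⟩ : Fin n)]
      · rw [if_pos]
        show (n - 1 - (j : ℕ)) + (j : ℕ) = n - 1
        have := j.isLt
        omega
      · intro i _ hi
        rw [if_neg]
        intro hcon
        apply hi
        apply Fin.ext
        show (i : ℕ) = n - 1 - (j : ℕ)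
        have := i.isLt
        have := j.isLt
        omega
      · intro h
        exact absurd (Finset.mem_univ _) h
    · intro p hp
      have hcoord : ∀ t, t ≤ 2 * n - 2 → (p t).1 + (p t).2 = t := by
        intro t
        induction t with
        | zero =>
          intro _
          simp [hp.1]
        | succ t iht =>
          intro ht
          have ht' : t < 2 * n - 2 := by omega
          have hs := iht (by omega)
          rcases hp.2.2 t ht' with h | h <;> rw [h] <;> simp <;> omega
      have hb : ∀ t ∈ Finset.range (2 * n - 1),
          ent X (p t) ≤ (if t = n - 1 then (1 : ℝ) else 0) := by
        intro t ht
        simp only [Finset.mem_range] at ht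
        have hc := hcoord t (by omega)
        unfold ent
        split
        · next h1 =>
          rw [hX]
          dsimp only
          split_ifs <;> first | (exfalso; omega) | norm_num
        · split_ifs <;> norm_num
      calc pathSum X p ≤ ∑ t ∈ Finset.range (2 * n - 1), (if t = n - 1 then (1 : ℝ) else 0) :=
            Finset.sum_le_sum hb
        _ = 1 := by
            rw [Finset.sum_ite_eq' (Finset.range (2 * n - 1)) (n - 1) (fun _ => (1 : ℝ)),
              if_pos (by simp only [Finset.mem_range]; omega)]
        _ ≤ ((1 : ℕ) : ℝ) := by norm_num
end

section
/- The number of lattice points of B_n^2 equals the Catalan number C_n, i.e., the number of 123-avoiding permutations in S_n is C_n = (1/(n+1))·binomial(2n,n). -/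
open scoped BigOperators

set_option linter.unusedSectionVars false

def cf : ℕ → ℕ → ℕ
  | 0, _ => 1
  | (n+1), m => (if m = 0 then 0 else cf n (m-1)) + ∑ j ∈ Finset.Icc m n, cf n j

lemma cf_zero (m : ℕ) : cf 0 m = 1 := rfl

lemma cf_succ (n m : ℕ) :
    cf (n+1) m = (if m = 0 then 0 else cf n (m-1)) + ∑ j ∈ Finset.Icc m n, cf n j := rfl

lemma cf_one_eq_zero (n : ℕ) : cf n 1 = cf n 0 := by
  cases n with
  | zero => rfl
  | succ n =>
    rw [cf_succ, cf_succ]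
    rw [show Finset.Icc 0 n = insert 0 (Finset.Icc 1 n) by ext x; simp; omega,
      Finset.sum_insert (by simp)]
    simp

lemma cf_of_le {n m : ℕ} (h : n ≤ m) : cf n m = 1 := by
  induction n generalizing m with
  | zero => rfl
  | succ n ih =>
    rw [cf_succ, if_neg (by omega), Finset.Icc_eq_empty (by omega)]
    simp [ih (by omega : n ≤ m - 1)]

lemma cf_diag (n : ℕ) : cf n n = 1 := cf_of_le le_rfl

lemma sum_Icc_shift (g : ℕ → ℕ) (a b : ℕ) :
    ∑ j ∈ Finset.Icc (a+1) (b+1), g (j-1) = ∑ j ∈ Finset.Icc a b, g j := by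
  rw [show Finset.Icc (a+1) (b+1) = Finset.map ⟨fun x => x+1, add_left_injective 1⟩ (Finset.Icc a b) by
      ext x
      simp only [Finset.mem_Icc, Finset.mem_map, Function.Embedding.coeFn_mk]
      constructor
      · rintro ⟨h1, h2⟩; exact ⟨x - 1, by omega, by omega⟩
      · rintro ⟨y, ⟨hy1, hy2⟩, rfl⟩; omega,
    Finset.sum_map]
  simp

lemma sum_swap_tri (F : ℕ → ℕ → ℕ) (m N : ℕ) :
    ∑ j ∈ Finset.Icc (m+1) (N+1), ∑ i ∈ Finset.range (N+2-j), F i j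
    = ∑ i ∈ Finset.range (N+1-m), ∑ j ∈ Finset.Icc (m+1) (N+1-i), F i j := by
  have h1 : ∀ j ∈ Finset.Icc (m+1) (N+1),
      ∑ i ∈ Finset.range (N+2-j), F i j
        = ∑ i ∈ Finset.range (N+1-m), if i + j ≤ N+1 then F i j else 0 := by
    intro j hj
    simp only [Finset.mem_Icc] at hj
    rw [← Finset.sum_filter]
    congr 1
    ext x; simp; omega
  have h2 : ∀ i ∈ Finset.range (N+1-m),
      ∑ j ∈ Finset.Icc (m+1) (N+1-i), F i j
        = ∑ j ∈ Finset.Icc (m+1) (N+1), if i + j ≤ N+1 then F i j else 0 := by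
    intro i hi
    simp only [Finset.mem_range] at hi
    rw [← Finset.sum_filter]
    congr 1
    ext x; simp; omega
  rw [Finset.sum_congr rfl h1, Finset.sum_congr rfl h2, Finset.sum_comm]

lemma cf_conv : ∀ n m : ℕ, cf (n+1) (m+1) = ∑ i ∈ Finset.range (n - m + 1), cf i 0 * cf (n - i) m := by
  intro n
  induction n using Nat.strong_induction_on with
  | _ n IH =>
    intro m
    cases n with
    | zero => simp [cf_succ, cf_zero]
    | succ N =>
      rw [cf_succ]
      rw [if_neg (Nat.succ_ne_zero m)]
      simp only [Nat.add_sub_cancel]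
      have hterm : ∀ j ∈ Finset.Icc (m+1) (N+1),
          cf (N+1) j = ∑ i ∈ Finset.range (N + 2 - j), cf i 0 * cf (N - i) (j - 1) := by
        intro j hj
        simp only [Finset.mem_Icc] at hj
        obtain ⟨j', rfl⟩ : ∃ j', j = j' + 1 := ⟨j-1, by omega⟩
        rw [IH N (by omega) j']
        have hr : N - j' + 1 = N + 2 - (j' + 1) := by omega
        simp only [Nat.add_sub_cancel, hr]
      rw [Finset.sum_congr rfl hterm, sum_swap_tri]
      have inner : ∀ i ∈ Finset.range (N + 1 - m),
          ∑ j ∈ Finset.Icc (m+1) (N + 1 - i), cf i 0 * cf (N - i) (j - 1)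
            = cf i 0 * ∑ j' ∈ Finset.Icc m (N - i), cf (N - i) j' := by
        intro i hi
        simp only [Finset.mem_range] at hi
        rw [Finset.mul_sum]
        have hNi : N + 1 - i = (N - i) + 1 := by omega
        rw [hNi, sum_Icc_shift (fun j => cf i 0 * cf (N - i) j) m (N - i)]
      rw [Finset.sum_congr rfl inner]
      -- RHS: split last term
      rw [show N + 1 - m + 1 = (N + 1 - m) + 1 from rfl, Finset.sum_range_succ]
      rw [cf_of_le (show N + 1 - (N + 1 - m) ≤ m by omega), mul_one]
      have hexp : ∀ i ∈ Finset.range (N + 1 - m),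
          cf i 0 * cf (N + 1 - i) m
            = cf i 0 * (if m = 0 then 0 else cf (N - i) (m-1))
              + cf i 0 * ∑ j' ∈ Finset.Icc m (N - i), cf (N - i) j' := by
        intro i hi
        simp only [Finset.mem_range] at hi
        have h1 : N + 1 - i = (N - i) + 1 := by omega
        rw [h1, cf_succ, mul_add]
      rw [Finset.sum_congr rfl hexp, Finset.sum_add_distrib]
      have hkey : cf (N+1) m
          = (∑ i ∈ Finset.range (N + 1 - m), cf i 0 * (if m = 0 then 0 else cf (N - i) (m-1)))
            + cf (N + 1 - m) 0 := by
        cases m with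
        | zero => simp
        | succ m' =>
          simp only [Nat.succ_ne_zero, if_neg (Nat.succ_ne_zero m'), Nat.add_sub_cancel]
          rw [IH N (by omega) m']
          have h2 : N - m' + 1 = (N + 1 - (m' + 1)) + 1 := by omega
          rw [h2, Finset.sum_range_succ]
          rw [cf_of_le (show N - (N + 1 - (m' + 1)) ≤ m' by omega), mul_one]
          simp
      omega

lemma cf_zero_eq_catalan : ∀ n, cf n 0 = catalan n := by
  intro n
  induction n using Nat.strong_induction_on with
  | _ n IH =>
    cases n with
    | zero => simp [cf_zero]
    | succ N =>
      rw [← cf_one_eq_zero, cf_conv N 0]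
      simp only [Nat.sub_zero]
      rw [catalan_succ, ← Fin.sum_univ_eq_sum_range (fun i => cf i 0 * cf (N - i) 0) (N+1)]
      apply Finset.sum_congr rfl
      intro i _
      have hi : (i : ℕ) < N + 1 := i.2
      rw [IH i (by omega), IH (N - i) (by omega)]
open scoped BigOperators
open Equiv

def Avoids {n : ℕ} (w : Equiv.Perm (Fin n)) : Prop :=
  ∀ a b c : Fin n, a < b → b < c → ¬ (w a < w b ∧ w b < w c)

def TopDec {n : ℕ} (m : ℕ) (w : Equiv.Perm (Fin n)) : Prop :=
  ∀ a b : Fin n, a < b → n ≤ (w a : ℕ) + m → n ≤ (w b : ℕ) + m → w b < w a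

lemma topDec_zero {n : ℕ} (w : Equiv.Perm (Fin n)) : TopDec 0 w :=
  fun a _ _ ha _ => absurd ha (by have := (w a).2; omega)

open Classical in
noncomputable def avSet (n m : ℕ) : Finset (Equiv.Perm (Fin n)) :=
  Finset.univ.filter (fun w => Avoids w ∧ TopDec m w)

lemma mem_avSet {n m : ℕ} {w : Equiv.Perm (Fin n)} :
    w ∈ avSet n m ↔ Avoids w ∧ TopDec m w := by
  simp [avSet]

/-- Insert a new first position with value `k`, shifting other values around `k`. -/
def grow {n : ℕ} (k : Fin (n+1)) (e : Equiv.Perm (Fin n)) : Equiv.Perm (Fin (n+1)) :=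
  ((finSuccEquiv n).trans (Equiv.optionCongr e)).trans (finSuccEquiv' k).symm

noncomputable def shrink {n : ℕ} (k : Fin (n+1)) (w : Equiv.Perm (Fin (n+1))) :
    Equiv.Perm (Fin n) :=
  Equiv.removeNone (((finSuccEquiv n).symm.trans w).trans (finSuccEquiv' k))

@[simp] lemma grow_zero {n : ℕ} (k : Fin (n+1)) (e : Equiv.Perm (Fin n)) :
    grow k e 0 = k := by
  simp [grow]

@[simp] lemma grow_succ {n : ℕ} (k : Fin (n+1)) (e : Equiv.Perm (Fin n)) (i : Fin n) :
    grow k e i.succ = k.succAbove (e i) := by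
  simp [grow]

lemma grow_shrink {n : ℕ} (k : Fin (n+1)) (w : Equiv.Perm (Fin (n+1))) (hw : w 0 = k) :
    grow k (shrink k w) = w := by
  refine Equiv.ext fun j => ?_
  rcases Fin.eq_zero_or_eq_succ j with rfl | ⟨i, rfl⟩
  · simp [hw]
  · rw [grow_succ]
    have hne : w i.succ ≠ k := by
      rw [← hw]
      intro h
      exact absurd (w.injective h) (Fin.succ_ne_zero i)
    obtain ⟨z, hz⟩ := Fin.exists_succAbove_eq hne
    have hσ : (((finSuccEquiv n).symm.trans w).trans (finSuccEquiv' k)) (some i) = some z := by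
      simp [← hz]
    have := Equiv.removeNone_some (((finSuccEquiv n).symm.trans w).trans (finSuccEquiv' k))
      (⟨z, hσ⟩ : ∃ x', _ = some x')
    rw [hσ] at this
    have hzz : shrink k w i = z := Option.some_injective _ this
    rw [hzz, hz]

lemma grow_injective {n : ℕ} (k : Fin (n+1)) : Function.Injective (grow (n := n) k) := by
  intro e e' h
  refine Equiv.ext fun i => ?_
  have := congrArg (fun w : Equiv.Perm (Fin (n+1)) => w i.succ) h
  simp only [grow_succ] at this
  exact Fin.succAbove_right_injective this

lemma shrink_grow {n : ℕ} (k : Fin (n+1)) (e : Equiv.Perm (Fin n)) :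
    shrink k (grow k e) = e :=
  grow_injective k (grow_shrink k (grow k e) (grow_zero k e))

lemma succAbove_val {n : ℕ} (k : Fin (n+1)) (i : Fin n) :
    ((k.succAbove i : Fin (n+1)) : ℕ) = if (i:ℕ) < (k:ℕ) then (i:ℕ) else (i:ℕ) + 1 := by
  rcases lt_or_ge ((i:ℕ)) ((k:ℕ)) with h | h
  · rw [Fin.succAbove_of_castSucc_lt _ _ (by simpa [Fin.lt_def] using h), if_pos h]
    simp
  · rw [Fin.succAbove_of_le_castSucc _ _ (by simpa [Fin.le_def] using h), if_neg (not_lt.2 h)]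
    simp

lemma k_lt_succAbove {n : ℕ} (k : Fin (n+1)) (x : Fin n) :
    k < k.succAbove x ↔ (k:ℕ) ≤ (x:ℕ) := by
  rw [Fin.lt_def, succAbove_val]
  split <;> omega

lemma succAbove_lt_succAbove {n : ℕ} (k : Fin (n+1)) (x y : Fin n) :
    k.succAbove x < k.succAbove y ↔ x < y :=
  Fin.succAbove_lt_succAbove_iff

lemma avoids_grow_iff {n : ℕ} (k : Fin (n+1)) (e : Equiv.Perm (Fin n)) :
    Avoids (grow k e) ↔ Avoids e ∧ TopDec (n - (k:ℕ)) e := by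
  have hk : (k:ℕ) ≤ n := by have := k.2; omega
  constructor
  · intro H
    refine ⟨?_, ?_⟩
    · intro a b c hab hbc ⟨h1, h2⟩
      exact H a.succ b.succ c.succ (Fin.succ_lt_succ_iff.2 hab) (Fin.succ_lt_succ_iff.2 hbc)
        ⟨by simpa [succAbove_lt_succAbove] using h1, by simpa [succAbove_lt_succAbove] using h2⟩
    · intro a b hab ha hb
      have hka : (k:ℕ) ≤ (e a : ℕ) := by omega
      have hkb : (k:ℕ) ≤ (e b : ℕ) := by omega
      rcases lt_trichotomy (e a) (e b) with h | h | h
      · exact absurd (H 0 a.succ b.succ (Fin.succ_pos a) (Fin.succ_lt_succ_iff.2 hab)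
          ⟨by rw [grow_zero, grow_succ]; exact (k_lt_succAbove k (e a)).2 hka,
           by rw [grow_succ, grow_succ]; exact (succAbove_lt_succAbove k _ _).2 h⟩) (fun h => h)
      · exact absurd (e.injective h) (by intro h'; exact absurd (h' ▸ hab) (lt_irrefl a))
      · exact h
  · rintro ⟨H1, H2⟩ a b c hab hbc ⟨h1, h2⟩
    rcases Fin.eq_zero_or_eq_succ a with rfl | ⟨a', rfl⟩
    · obtain ⟨b', rfl⟩ : ∃ b' : Fin n, b = Fin.succ b' := by
        rcases Fin.eq_zero_or_eq_succ b with rfl | h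
        · exact absurd hab (lt_irrefl 0)
        · exact h
      obtain ⟨c', rfl⟩ : ∃ c' : Fin n, c = Fin.succ c' := by
        rcases Fin.eq_zero_or_eq_succ c with rfl | h
        · exact absurd (hab.trans hbc) (by simp [Fin.lt_def])
        · exact h
      rw [grow_zero, grow_succ] at h1
      rw [grow_succ, grow_succ] at h2
      have hb' : (k:ℕ) ≤ (e b' : ℕ) := (k_lt_succAbove k (e b')).1 h1
      have hcc : e b' < e c' := (succAbove_lt_succAbove k _ _).1 h2
      have hc' : (k:ℕ) ≤ (e c' : ℕ) := le_of_lt (lt_of_le_of_lt hb' (by exact_mod_cast hcc))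
      exact absurd (H2 b' c' (Fin.succ_lt_succ_iff.1 hbc) (by omega) (by omega))
        (not_lt.2 (le_of_lt hcc))
    · obtain ⟨b', rfl⟩ : ∃ b' : Fin n, b = Fin.succ b' := by
        rcases Fin.eq_zero_or_eq_succ b with rfl | h
        · exact absurd hab (by simp [Fin.lt_def])
        · exact h
      obtain ⟨c', rfl⟩ : ∃ c' : Fin n, c = Fin.succ c' := by
        rcases Fin.eq_zero_or_eq_succ c with rfl | h
        · exact absurd hbc (by simp [Fin.lt_def])
        · exact h
      rw [grow_succ, grow_succ] at h1 h2
      exact H1 a' b' c' (Fin.succ_lt_succ_iff.1 hab) (Fin.succ_lt_succ_iff.1 hbc)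
        ⟨(succAbove_lt_succAbove k _ _).1 h1, (succAbove_lt_succAbove k _ _).1 h2⟩

lemma grow_mem_low {n m : ℕ} (k : Fin (n+1)) (e : Equiv.Perm (Fin n)) (hk : (k:ℕ) + m ≤ n) :
    (Avoids (grow k e) ∧ TopDec m (grow k e)) ↔ (Avoids e ∧ TopDec (n - (k:ℕ)) e) := by
  constructor
  · intro ⟨H, _⟩
    exact (avoids_grow_iff k e).1 H
  · rintro ⟨H1, H2⟩
    refine ⟨(avoids_grow_iff k e).2 ⟨H1, H2⟩, ?_⟩
    intro a b hab ha hb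
    obtain ⟨a', rfl⟩ : ∃ a' : Fin n, a = Fin.succ a' := by
      rcases Fin.eq_zero_or_eq_succ a with rfl | h
      · exfalso
        rw [grow_zero] at ha
        omega
      · exact h
    obtain ⟨b', rfl⟩ : ∃ b' : Fin n, b = Fin.succ b' := by
      rcases Fin.eq_zero_or_eq_succ b with rfl | h
      · exact absurd hab (by simp [Fin.lt_def])
      · exact h
    rw [grow_succ] at ha hb ⊢
    rw [grow_succ]
    rw [succAbove_val] at ha hb
    rw [succAbove_lt_succAbove]
    have ha' : (k:ℕ) ≤ (e a' : ℕ) ∧ n ≤ (e a' : ℕ) + (n - (k:ℕ)) := by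
      split at ha <;> omega
    have hb' : (k:ℕ) ≤ (e b' : ℕ) ∧ n ≤ (e b' : ℕ) + (n - (k:ℕ)) := by
      split at hb <;> omega
    exact H2 a' b' (Fin.succ_lt_succ_iff.1 hab) ha'.2 hb'.2

lemma grow_mem_top {n m : ℕ} (k : Fin (n+1)) (e : Equiv.Perm (Fin n))
    (hk : (k:ℕ) = n) (hm : 1 ≤ m) :
    (Avoids (grow k e) ∧ TopDec m (grow k e)) ↔ (Avoids e ∧ TopDec (m-1) e) := by
  have hsa : ∀ x : Fin n, ((k.succAbove x : Fin (n+1)) : ℕ) = (x : ℕ) := by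
    intro x
    rw [succAbove_val, if_pos (by have := x.2; omega)]
  constructor
  · intro ⟨H, H2⟩
    refine ⟨((avoids_grow_iff k e).1 H).1, ?_⟩
    intro a b hab ha hb
    have := H2 a.succ b.succ (Fin.succ_lt_succ_iff.2 hab)
      (by rw [grow_succ, hsa]; omega) (by rw [grow_succ, hsa]; omega)
    rw [grow_succ, grow_succ, Fin.lt_def, hsa, hsa] at this
    exact Fin.lt_def.2 this
  · rintro ⟨H1, H2⟩
    refine ⟨(avoids_grow_iff k e).2 ⟨H1, by rw [hk]; simp; exact topDec_zero e⟩, ?_⟩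
    intro a b hab ha hb
    obtain ⟨b', rfl⟩ : ∃ b' : Fin n, b = Fin.succ b' := by
      rcases Fin.eq_zero_or_eq_succ b with rfl | h
      · exact absurd hab (by simp [Fin.lt_def])
      · exact h
    rcases Fin.eq_zero_or_eq_succ a with rfl | ⟨a', rfl⟩
    · rw [grow_zero, grow_succ, Fin.lt_def, hsa]
      have := (e b').2
      omega
    · rw [grow_succ] at ha hb ⊢
      rw [grow_succ]
      rw [hsa] at ha hb
      rw [Fin.lt_def, hsa, hsa]
      exact Fin.lt_def.1 (H2 a' b' (Fin.succ_lt_succ_iff.1 hab) (by omega) (by omega))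

lemma fiber_empty {n m : ℕ} (k : Fin (n+1)) (w : Equiv.Perm (Fin (n+1)))
    (hw : w 0 = k) (hk1 : n < (k:ℕ) + m) (hk2 : (k:ℕ) ≠ n) :
    ¬ (Avoids w ∧ TopDec m w) := by
  rintro ⟨_, H2⟩
  set x := w.symm (Fin.last n) with hx
  have hwx : w x = Fin.last n := w.apply_symm_apply _
  have hxne : x ≠ 0 := by
    intro h
    rw [h, hw] at hwx
    exact hk2 (by simp [hwx])
  have h0x : (0 : Fin (n+1)) < x := Fin.pos_of_ne_zero hxne
  have hklen : (k:ℕ) ≤ n := by have := k.2; omega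
  have := H2 0 x h0x (by rw [hw]; omega) (by rw [hwx]; simp [Fin.last]; omega)
  rw [hw, hwx, Fin.lt_def] at this
  simp [Fin.last] at this
  omega

lemma card_fiber {n m : ℕ} (k : Fin (n+1)) :
    ((avSet (n+1) m).filter (fun w => w 0 = k)).card
      = if (k:ℕ) + m ≤ n then (avSet n (n - (k:ℕ))).card
        else if (k:ℕ) = n then (avSet n (m-1)).card else 0 := by
  classical
  by_cases h1 : (k:ℕ) + m ≤ n
  · rw [if_pos h1]
    apply Finset.card_bij' (fun w _ => shrink k w) (fun e _ => grow k e)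
    · intro w hw
      simp only [Finset.mem_filter, mem_avSet] at hw
      obtain ⟨⟨hA, hT⟩, h0⟩ := hw
      rw [mem_avSet]
      have := (grow_mem_low k (shrink k w) h1).1 (by rw [grow_shrink k w h0]; exact ⟨hA, hT⟩)
      exact this
    · intro e he
      simp only [Finset.mem_filter, mem_avSet]
      rw [mem_avSet] at he
      exact ⟨(grow_mem_low k e h1).2 he, grow_zero k e⟩
    · intro w hw
      simp only [Finset.mem_filter] at hw
      exact grow_shrink k w hw.2
    · intro e _
      exact shrink_grow k e
  · rw [if_neg h1]
    by_cases h2 : (k:ℕ) = n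
    · rw [if_pos h2]
      have hm : 1 ≤ m := by omega
      apply Finset.card_bij' (fun w _ => shrink k w) (fun e _ => grow k e)
      · intro w hw
        simp only [Finset.mem_filter, mem_avSet] at hw
        obtain ⟨⟨hA, hT⟩, h0⟩ := hw
        rw [mem_avSet]
        exact (grow_mem_top k (shrink k w) h2 hm).1 (by rw [grow_shrink k w h0]; exact ⟨hA, hT⟩)
      · intro e he
        simp only [Finset.mem_filter, mem_avSet]
        rw [mem_avSet] at he
        exact ⟨(grow_mem_top k e h2 hm).2 he, grow_zero k e⟩
      · intro w hw
        simp only [Finset.mem_filter] at hw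
        exact grow_shrink k w hw.2
      · intro e _
        exact shrink_grow k e
    · rw [if_neg h2, Finset.card_eq_zero, Finset.filter_eq_empty_iff]
      intro w hw
      rw [mem_avSet] at hw
      intro h0
      exact fiber_empty k w h0 (by omega) h2 hw

lemma sum_fiber_cf (n m : ℕ) :
    ∑ k : Fin (n+1), (if (k:ℕ) + m ≤ n then cf n (n - (k:ℕ))
        else if (k:ℕ) = n then cf n (m-1) else 0) = cf (n+1) m := by
  rw [Fin.sum_univ_eq_sum_range
    (fun k => if k + m ≤ n then cf n (n - k) else if k = n then cf n (m-1) else 0) (n+1)]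
  rw [← Finset.sum_range_reflect]
  have hcongr : ∀ j ∈ Finset.range (n+1),
      (if (n + 1 - 1 - j) + m ≤ n then cf n (n - (n + 1 - 1 - j))
        else if (n + 1 - 1 - j) = n then cf n (m-1) else 0)
      = (if m ≤ j then cf n j else if j = 0 then cf n (m-1) else 0) := by
    intro j hj
    simp only [Finset.mem_range] at hj
    have h1 : n + 1 - 1 - j = n - j := by omega
    rw [h1]
    by_cases hmj : m ≤ j
    · rw [if_pos (by omega), if_pos hmj]
      congr 1
      omega
    · rw [if_neg (by omega), if_neg hmj]
      by_cases hj0 : j = 0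
      · rw [if_pos (by omega), if_pos hj0]
      · rw [if_neg (by omega), if_neg hj0]
  rw [Finset.sum_congr rfl hcongr]
  cases m with
  | zero =>
    rw [cf_succ]
    rw [show Finset.range (n+1) = Finset.Icc 0 n by ext x; simp [Nat.lt_succ_iff]]
    have h0 : (∑ x ∈ Finset.Icc 0 n, if 0 ≤ x then cf n x else if x = 0 then cf n (0-1) else 0)
        = ∑ x ∈ Finset.Icc 0 n, cf n x :=
      Finset.sum_congr rfl (fun j _ => if_pos (Nat.zero_le j))
    rw [h0]
    simp
  | succ m' =>
    rw [show Finset.range (n+1) = insert 0 (Finset.Icc 1 n) by ext x; simp; omega,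
      Finset.sum_insert (by simp)]
    rw [if_neg (by omega), if_pos rfl]
    rw [cf_succ, if_neg (Nat.succ_ne_zero m')]
    simp only [Nat.add_sub_cancel]
    congr 1
    have : ∀ j ∈ Finset.Icc 1 n,
        (if m' + 1 ≤ j then cf n j else if j = 0 then cf n m' else 0)
          = (if m' + 1 ≤ j then cf n j else 0) := by
      intro j hj
      simp only [Finset.mem_Icc] at hj
      by_cases h : m' + 1 ≤ j
      · rw [if_pos h, if_pos h]
      · rw [if_neg h, if_neg h, if_neg (by omega)]
    rw [Finset.sum_congr rfl this, ← Finset.sum_filter]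
    congr 1
    ext x
    simp
    omega

lemma card_avSet : ∀ n m, (avSet n m).card = cf n m := by
  intro n
  induction n with
  | zero =>
    intro m
    classical
    rw [cf_zero]
    have hall : ∀ w : Equiv.Perm (Fin 0), Avoids w ∧ TopDec m w :=
      fun w => ⟨fun a _ _ _ _ _ => a.elim0, fun a _ _ _ _ => a.elim0⟩
    rw [avSet, Finset.filter_true_of_mem (fun w _ => hall w), Finset.card_univ]
    simp
  | succ n IH =>
    intro m
    classical
    rw [Finset.card_eq_sum_card_fiberwise
      (f := fun w : Equiv.Perm (Fin (n+1)) => w 0) (t := Finset.univ)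
      (fun x _ => Finset.mem_univ _)]
    rw [← sum_fiber_cf n m]
    apply Finset.sum_congr rfl
    intro k _
    rw [show {a ∈ avSet (n+1) m | a 0 = k} = (avSet (n+1) m).filter (fun w => w 0 = k) from rfl]
    rw [card_fiber k]
    split
    · exact IH _
    · split
      · exact IH _
      · rfl


def permMatrix {n : ℕ} (w : Equiv.Perm (Fin n)) : Matrix (Fin n) (Fin n) ℝ :=
  fun i j => if w i = j then 1 else 0

lemma permMatrix_injective {n : ℕ} : Function.Injective (permMatrix (n := n)) := by
  intro w w' h
  refine Equiv.ext fun i => ?_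
  have := congrFun (congrFun h i) (w' i)
  by_contra hne
  simp only [permMatrix] at this
  simp only [if_pos rfl, if_neg hne] at this
  norm_num at this

lemma permMatrix_apply {n : ℕ} (w : Equiv.Perm (Fin n)) (i j : Fin n) :
    permMatrix w i j = if w i = j then 1 else 0 := rfl

lemma permMatrix_nonneg {n : ℕ} (w : Equiv.Perm (Fin n)) (i j : Fin n) :
    0 ≤ permMatrix w i j := by
  rw [permMatrix_apply]; split <;> norm_num

lemma permMatrix_row {n : ℕ} (w : Equiv.Perm (Fin n)) (i : Fin n) :
    ∑ j, permMatrix w i j = 1 := by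
  simp only [permMatrix_apply]
  simp

lemma permMatrix_col {n : ℕ} (w : Equiv.Perm (Fin n)) (j : Fin n) :
    ∑ i, permMatrix w i j = 1 := by
  simp only [permMatrix_apply, Equiv.apply_eq_iff_eq_symm_apply]
  simp

lemma ent_nonneg {n : ℕ} {w : Equiv.Perm (Fin n)} (q : ℕ × ℕ) :
    0 ≤ ent (permMatrix w) q := by
  rw [ent]
  split
  · exact permMatrix_nonneg w _ _
  · exact le_refl 0

lemma path_coord_sum {n : ℕ} {p : ℕ → ℕ × ℕ} (hp : IsLatticePath n p) :
    ∀ t, t ≤ 2 * n - 2 → (p t).1 + (p t).2 = t := by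
  intro t
  induction t with
  | zero => intro _; rw [hp.1]; rfl
  | succ s ih =>
    intro hs
    rcases hp.2.2 s (by omega) with h | h <;> rw [h] <;> simp <;> omega

lemma path_mono {n : ℕ} {p : ℕ → ℕ × ℕ} (hp : IsLatticePath n p) :
    ∀ s t, s ≤ t → t ≤ 2 * n - 2 → (p s).1 ≤ (p t).1 ∧ (p s).2 ≤ (p t).2 := by
  intro s t hst
  induction t with
  | zero =>
    intro _
    have : s = 0 := by omega
    subst this
    exact ⟨le_refl _, le_refl _⟩
  | succ u ih =>
    intro hu
    rcases Nat.lt_or_ge s (u+1) with h | h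
    · have h2 := ih (by omega) (by omega)
      rcases hp.2.2 u (by omega) with h3 | h3 <;> rw [h3] <;> simp <;> omega
    · have : s = u + 1 := by omega
      subst this
      exact ⟨le_refl _, le_refl _⟩

lemma mem_ones {n : ℕ} {w : Equiv.Perm (Fin n)} {q : ℕ × ℕ}
    (h : ent (permMatrix w) q ≠ 0) :
    ∃ i : Fin n, q.1 = (i : ℕ) ∧ q.2 = ((w i : Fin n) : ℕ) := by
  rw [ent] at h
  split at h
  · rename_i hq
    refine ⟨⟨q.1, hq.1⟩, rfl, ?_⟩
    rw [permMatrix_apply] at h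
    split at h
    · rename_i hw
      rw [hw]
    · exact absurd rfl h
  · exact absurd rfl h

lemma pathSum_le_two {n : ℕ} {w : Equiv.Perm (Fin n)} (hA : Avoids w)
    {p : ℕ → ℕ × ℕ} (hp : IsLatticePath n p) :
    pathSum (permMatrix w) p ≤ 2 := by
  classical
  set T : Finset ℕ := (Finset.range (2*n-1)).filter
    (fun t => ent (permMatrix w) (p t) ≠ 0) with hT
  have hsum : pathSum (permMatrix w) p = ∑ t ∈ T, ent (permMatrix w) (p t) := by
    rw [pathSum, hT]
    rw [Finset.sum_filter_of_ne]
    intro t _ h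
    exact h
  -- each entry in T is 1
  have hone : ∀ t ∈ T, ent (permMatrix w) (p t) = 1 := by
    intro t ht
    rw [hT, Finset.mem_filter] at ht
    have h2 := ht.2
    rw [ent] at h2 ⊢
    split at h2
    · rename_i hq
      rw [permMatrix_apply] at h2
      split at h2
      · rename_i hw
        rw [dif_pos hq, permMatrix_apply, if_pos hw]
      · exact absurd rfl h2
    · exact absurd rfl h2
  have hsum2 : pathSum (permMatrix w) p = (T.card : ℝ) := by
    rw [hsum, Finset.sum_congr rfl hone]
    simp
  rw [hsum2]
  -- key: increasing along T
  have hinc : ∀ s ∈ T, ∀ t ∈ T, s < t →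
      ∃ i j : Fin n, i < j ∧ w i < w j ∧ (p s).1 = (i:ℕ) ∧ (p t).1 = (j:ℕ) := by
    intro s hs t ht hst
    rw [hT, Finset.mem_filter, Finset.mem_range] at hs ht
    obtain ⟨i, hi1, hi2⟩ := mem_ones hs.2
    obtain ⟨j, hj1, hj2⟩ := mem_ones ht.2
    have hcs : (p s).1 + (p s).2 = s := path_coord_sum hp s (by omega)
    have hct : (p t).1 + (p t).2 = t := path_coord_sum hp t (by omega)
    have hmono := path_mono hp s t (le_of_lt hst) (by omega)
    have hij : (i : ℕ) < (j : ℕ) := by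
      rcases Nat.lt_or_ge (i : ℕ) (j : ℕ) with h | h
      · exact h
      · exfalso
        have : (i : ℕ) = (j : ℕ) := by omega
        have hij' : i = j := Fin.val_injective this
        subst hij'
        omega
    have hwij : ((w i : Fin n) : ℕ) < ((w j : Fin n) : ℕ) := by
      rcases Nat.lt_or_ge ((w i : Fin n) : ℕ) ((w j : Fin n) : ℕ) with h | h
      · exact h
      · exfalso
        have : ((w i : Fin n) : ℕ) = ((w j : Fin n) : ℕ) := by omega
        have := w.injective (Fin.val_injective this)
        subst this
        omega
    exact ⟨i, j, Fin.lt_def.2 hij, Fin.lt_def.2 hwij, hi1, hj1⟩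
  have hcard : T.card ≤ 2 := by
    by_contra hc
    push_neg at hc
    obtain ⟨x, y, z, hx, hy, hz, hxy, hxz, hyz⟩ := Finset.two_lt_card_iff.1 hc
    have main : ∀ u v r : ℕ, u ∈ T → v ∈ T → r ∈ T → u < v → v < r → False := by
      intro u v r hu hv hr huv hvr
      obtain ⟨i, j, hij, hwij, _, hj⟩ := hinc u hu v hv huv
      obtain ⟨j', k, hjk, hwjk, hj', hk⟩ := hinc v hv r hr hvr
      have : j = j' := Fin.val_injective (by omega)
      subst this
      exact hA i j k hij hjk ⟨hwij, hwjk⟩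
    rcases lt_trichotomy x y with h1 | h1 | h1
    · rcases lt_trichotomy y z with h2 | h2 | h2
      · exact main x y z hx hy hz h1 h2
      · exact hyz h2
      · rcases lt_trichotomy x z with h3 | h3 | h3
        · exact main x z y hx hz hy h3 h2
        · exact hxz h3
        · exact main z x y hz hx hy h3 h1
    · exact hxy h1
    · rcases lt_trichotomy x z with h2 | h2 | h2
      · exact main y x z hy hx hz h1 h2
      · exact hxz h2
      · rcases lt_trichotomy y z with h3 | h3 | h3
        · exact main y z x hy hz hx h3 h2
        · exact hyz h3
        · exact main z y x hz hy hx h3 h1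
  exact_mod_cast Nat.cast_le.2 hcard

/-- segment of a staircase path: from `(x1,y1)` go right to `(x2,y1)` then up. -/
def seg (y1 x2 : ℕ) (t : ℕ) : ℕ × ℕ :=
  if t ≤ x2 + y1 then (t - y1, y1) else (x2, t - x2)

/-- staircase path through `(a,wa)`, `(b,wb)`, `(c,wc)`. -/
def path3 (n a wa b wb c wc : ℕ) (t : ℕ) : ℕ × ℕ :=
  if t ≤ a + wa then seg 0 a t
  else if t ≤ b + wb then seg wa b t
  else if t ≤ c + wc then seg wb c t
  else seg wc (n-1) t

section path3
variable {n a wa b wb c wc : ℕ}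
variable (hab : a < b) (hbc : b < c) (hcn : c < n)
variable (hwab : wa < wb) (hwbc : wb < wc) (hwcn : wc < n)
include hab hbc hcn hwab hwbc hwcn

lemma path3_lattice : IsLatticePath n (path3 n a wa b wb c wc) := by
  refine ⟨?_, ?_, ?_⟩
  · unfold path3 seg
    split_ifs <;> simp only [Prod.mk.injEq, true_and, and_true] <;> omega
  · unfold path3 seg
    split_ifs <;> simp only [Prod.mk.injEq, true_and, and_true] <;> omega
  · intro i hi
    unfold path3 seg
    split_ifs <;> simp only [Prod.mk.injEq, true_and, and_true] <;> omega

lemma path3_at_A : path3 n a wa b wb c wc (a + wa) = (a, wa) := by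
  unfold path3 seg
  split_ifs <;> simp only [Prod.mk.injEq, true_and, and_true] <;> omega

lemma path3_at_B : path3 n a wa b wb c wc (b + wb) = (b, wb) := by
  unfold path3 seg
  split_ifs <;> simp only [Prod.mk.injEq, true_and, and_true] <;> omega

lemma path3_at_C : path3 n a wa b wb c wc (c + wc) = (c, wc) := by
  unfold path3 seg
  split_ifs <;> simp only [Prod.mk.injEq, true_and, and_true] <;> omega

end path3

lemma ent_point {n : ℕ} (w : Equiv.Perm (Fin n)) (i : Fin n) :
    ent (permMatrix w) ((i : ℕ), ((w i : Fin n) : ℕ)) = 1 := by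
  rw [ent, dif_pos ⟨i.2, (w i).2⟩, permMatrix_apply, if_pos]
  congr <;> simp [Fin.eta]

lemma avoids_of_birkhoff {n : ℕ} (w : Equiv.Perm (Fin n))
    (hB : InRestrictedBirkhoff n 2 (permMatrix w)) : Avoids w := by
  intro a b c hab hbc ⟨h1, h2⟩
  set p := path3 n (a:ℕ) ((w a : Fin n):ℕ) (b:ℕ) ((w b : Fin n):ℕ) (c:ℕ) ((w c : Fin n):ℕ)
    with hpdef
  have hab' : (a:ℕ) < (b:ℕ) := hab
  have hbc' : (b:ℕ) < (c:ℕ) := hbc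
  have hcn : (c:ℕ) < n := c.2
  have h1' : ((w a : Fin n):ℕ) < ((w b : Fin n):ℕ) := h1
  have h2' : ((w b : Fin n):ℕ) < ((w c : Fin n):ℕ) := h2
  have hwcn : ((w c : Fin n):ℕ) < n := (w c).2
  have hlat : IsLatticePath n p := path3_lattice hab' hbc' hcn h1' h2' hwcn
  have hle := hB.2.2.2 p hlat
  set A := (a:ℕ) + ((w a : Fin n):ℕ)
  set B := (b:ℕ) + ((w b : Fin n):ℕ)
  set C := (c:ℕ) + ((w c : Fin n):ℕ)
  have hABC : A < B ∧ B < C ∧ C ≤ 2 * n - 2 := by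
    refine ⟨by omega, by omega, by omega⟩
  have hsub : ({A, B, C} : Finset ℕ) ⊆ Finset.range (2 * n - 1) := by
    intro x hx
    simp only [Finset.mem_insert, Finset.mem_singleton] at hx
    rw [Finset.mem_range]
    rcases hx with rfl | rfl | rfl <;> omega
  have hge : (3:ℝ) ≤ pathSum (permMatrix w) p := by
    rw [pathSum]
    have h3 : ∑ t ∈ ({A, B, C} : Finset ℕ), ent (permMatrix w) (p t) = 3 := by
      rw [Finset.sum_insert (by simp; omega), Finset.sum_insert (by simp; omega),
        Finset.sum_singleton]
      rw [hpdef]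
      rw [path3_at_A hab' hbc' hcn h1' h2' hwcn,
        path3_at_B hab' hbc' hcn h1' h2' hwcn,
        path3_at_C hab' hbc' hcn h1' h2' hwcn]
      rw [ent_point, ent_point, ent_point]
      norm_num
    rw [← h3]
    exact Finset.sum_le_sum_of_subset_of_nonneg hsub (fun t _ _ => ent_nonneg (p t))
  have : ((2:ℕ) : ℝ) < 3 := by norm_num
  linarith

lemma exists_perm_of_integer {n : ℕ} (X : Matrix (Fin n) (Fin n) ℝ)
    (hB : InRestrictedBirkhoff n 2 X) (hI : IsIntegerMatrix X) :
    ∃ w : Equiv.Perm (Fin n), X = permMatrix w := by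
  classical
  have row1 : ∀ i, ∃ j, X i j = 1 ∧ ∀ j', j' ≠ j → X i j' = 0 := by
    intro i
    obtain ⟨j, hj⟩ : ∃ j, 0 < X i j := by
      by_contra h
      push_neg at h
      have hz : ∑ j, X i j = 0 :=
        Finset.sum_eq_zero (fun j _ => le_antisymm (h j) (hB.1 i j))
      rw [hB.2.1 i] at hz
      norm_num at hz
    have hrest : ∑ j' ∈ Finset.univ.erase j, X i j' = 1 - X i j := by
      have h := hB.2.1 i
      rw [← Finset.add_sum_erase _ _ (Finset.mem_univ j)] at h
      linarith
    obtain ⟨mij, hm⟩ := hI i j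
    have h1le : (1:ℝ) ≤ X i j := by
      rw [hm] at hj ⊢
      have : (0:ℤ) < mij := by exact_mod_cast hj
      exact_mod_cast this
    have hnn : ∀ x ∈ Finset.univ.erase j, 0 ≤ X i x := fun x _ => hB.1 i x
    have hrest0 : ∑ j' ∈ Finset.univ.erase j, X i j' = 0 := by
      have hge : (0:ℝ) ≤ ∑ j' ∈ Finset.univ.erase j, X i j' := Finset.sum_nonneg hnn
      linarith
    refine ⟨j, by linarith, ?_⟩
    intro j' hj'
    exact (Finset.sum_eq_zero_iff_of_nonneg hnn).1 hrest0 j'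
      (Finset.mem_erase.2 ⟨hj', Finset.mem_univ _⟩)
  choose w0 hw1 hw0 using row1
  have hinj : Function.Injective w0 := by
    intro i1 i2 h12
    by_contra hne
    have hcol := hB.2.2.1 (w0 i1)
    have hsub : ({i1, i2} : Finset (Fin n)) ⊆ Finset.univ := fun x _ => Finset.mem_univ x
    have hpair : ∑ i ∈ ({i1, i2} : Finset (Fin n)), X i (w0 i1) = 2 := by
      rw [Finset.sum_pair hne, hw1 i1, h12, hw1 i2]
      norm_num
    have := Finset.sum_le_sum_of_subset_of_nonneg hsub
      (fun x _ _ => hB.1 x (w0 i1))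
    rw [hpair, hcol] at this
    norm_num at this
  have hbij : Function.Bijective w0 := (Finite.injective_iff_bijective).1 hinj
  refine ⟨Equiv.ofBijective w0 hbij, ?_⟩
  ext i j
  rw [permMatrix_apply]
  simp only [Equiv.ofBijective_apply]
  by_cases h : w0 i = j
  · rw [if_pos h, ← h, hw1 i]
  · rw [if_neg h]
    exact hw0 i j (fun hh => h hh.symm)

lemma avoids_ncard (n : ℕ) :
    {w : Equiv.Perm (Fin n) | Avoids w}.ncard = catalan n := by
  have hset : {w : Equiv.Perm (Fin n) | Avoids w} = ↑(avSet n 0) := by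
    ext w
    rw [Set.mem_setOf_eq, Finset.mem_coe, mem_avSet]
    exact ⟨fun h => ⟨h, topDec_zero w⟩, fun h => h.1⟩
  rw [hset, Set.ncard_coe_finset, card_avSet, cf_zero_eq_catalan]

/-- The number of lattice points of `B_n^2` is the Catalan number
`C_n = (1/(n+1))·binom(2n, n)`, which also counts 123-avoiding permutations. -/
theorem latticePoints_Bn2_catalan (n : ℕ) :
    {X : Matrix (Fin n) (Fin n) ℝ |
        InRestrictedBirkhoff n 2 X ∧ IsIntegerMatrix X}.ncard = catalan n ∧
    {w : Equiv.Perm (Fin n) |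
        ∀ a b c : Fin n, a < b → b < c → ¬ (w a < w b ∧ w b < w c)}.ncard = catalan n ∧
    catalan n = Nat.choose (2 * n) n / (n + 1) := by
  refine ⟨?_, ?_, ?_⟩
  · have hmatset : {X : Matrix (Fin n) (Fin n) ℝ |
        InRestrictedBirkhoff n 2 X ∧ IsIntegerMatrix X}
        = permMatrix '' {w : Equiv.Perm (Fin n) | Avoids w} := by
      ext X
      simp only [Set.mem_setOf_eq, Set.mem_image]
      constructor
      · rintro ⟨hB, hI⟩
        obtain ⟨w, rfl⟩ := exists_perm_of_integer X hB hI
        exact ⟨w, avoids_of_birkhoff w hB, rfl⟩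
      · rintro ⟨w, hw, rfl⟩
        refine ⟨⟨permMatrix_nonneg w, permMatrix_row w, permMatrix_col w, ?_⟩, ?_⟩
        · intro p hp
          have := pathSum_le_two hw hp
          simpa using this
        · intro i j
          rw [permMatrix_apply]
          split
          exacts [⟨1, by norm_num⟩, ⟨0, by norm_num⟩]
    rw [hmatset, Set.ncard_image_of_injective _ permMatrix_injective]
    exact avoids_ncard n
  · exact avoids_ncard n
  · rw [catalan_eq_centralBinom_div]
    rfl
end

section
/- Every lattice point of the polytope M_n^k is a vertex of M_n^k. -/
open scoped BigOperators
open Matrix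

/-- Sum along the diagonal `j - i = l` (upper diagonals, `l ≥ 0`). -/
def diagU {n : ℕ} (Y : Matrix (Fin n) (Fin n) ℝ) (l : ℕ) : ℝ :=
  ∑ i : Fin n, ∑ j : Fin n, if (j : ℕ) = (i : ℕ) + l then Y i j else 0

/-- Sum along the diagonal `i - j = l` (lower diagonals). -/
def diagL {n : ℕ} (Y : Matrix (Fin n) (Fin n) ℝ) (l : ℕ) : ℝ :=
  ∑ i : Fin n, ∑ j : Fin n, if (i : ℕ) = (j : ℕ) + l then Y i j else 0

/-- Membership in the polytope `M_n^k`: entries weakly increasing along rows and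
columns, `y_{1,1} ≥ 0`, `y_{n,n} ≤ k`, upper diagonal sums `(1, 2, …, n)` (i.e. the
diagonal `j - i = l` sums to `n - l`) and lower diagonal sums `(n, n-1, …, 1)`. -/
def InM (n k : ℕ) (Y : Matrix (Fin n) (Fin n) ℝ) : Prop :=
  (∀ i i' j j' : Fin n, i ≤ i' → j ≤ j' → Y i j ≤ Y i' j') ∧
  (∀ h : 0 < n, 0 ≤ Y ⟨0, h⟩ ⟨0, h⟩ ∧
      Y ⟨n - 1, Nat.sub_lt h one_pos⟩ ⟨n - 1, Nat.sub_lt h one_pos⟩ ≤ k) ∧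
  (∀ l : Fin n, diagU Y l = ((n - (l : ℕ) : ℕ) : ℝ)) ∧
  (∀ l : Fin n, diagL Y l = ((n - (l : ℕ) : ℕ) : ℝ))

/-- Entries extended to ℕ-indices, zero outside the range. -/
def Ent {n : ℕ} (Y : Matrix (Fin n) (Fin n) ℝ) (i j : ℕ) : ℝ :=
  if h : i < n ∧ j < n then Y ⟨i, h.1⟩ ⟨j, h.2⟩ else 0

lemma Ent_eq {n : ℕ} (Y : Matrix (Fin n) (Fin n) ℝ) {i j : ℕ} (hi : i < n) (hj : j < n) :
    Ent Y i j = Y ⟨i, hi⟩ ⟨j, hj⟩ := dif_pos ⟨hi, hj⟩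

lemma Ent_zero_right {n : ℕ} (Y : Matrix (Fin n) (Fin n) ℝ) {i j : ℕ} (hj : n ≤ j) :
    Ent Y i j = 0 := dif_neg (by omega)

lemma Ent_transpose {n : ℕ} (Y : Matrix (Fin n) (Fin n) ℝ) (i j : ℕ) :
    Ent Yᵀ i j = Ent Y j i := by
  unfold Ent
  by_cases h : i < n ∧ j < n
  · rw [dif_pos h, dif_pos ⟨h.2, h.1⟩]; rfl
  · rw [dif_neg h, dif_neg (fun h' => h ⟨h'.2, h'.1⟩)]

lemma Ent_mono {n k : ℕ} {Y : Matrix (Fin n) (Fin n) ℝ} (hY : InM n k Y)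
    {i i' j j' : ℕ} (hi' : i' < n) (hj' : j' < n) (h1 : i ≤ i') (h2 : j ≤ j') :
    Ent Y i j ≤ Ent Y i' j' := by
  rw [Ent_eq Y (lt_of_le_of_lt h1 hi') (lt_of_le_of_lt h2 hj'), Ent_eq Y hi' hj']
  exact hY.1 _ _ _ _ (Fin.mk_le_mk.mpr h1) (Fin.mk_le_mk.mpr h2)

lemma Ent_nonneg {n k : ℕ} {Y : Matrix (Fin n) (Fin n) ℝ} (hY : InM n k Y) (i j : ℕ) :
    0 ≤ Ent Y i j := by
  unfold Ent
  split_ifs with h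
  · calc (0:ℝ) ≤ Y ⟨0, by omega⟩ ⟨0, by omega⟩ := (hY.2.1 (by omega)).1
      _ ≤ Y ⟨i, h.1⟩ ⟨j, h.2⟩ :=
        hY.1 _ _ _ _ (Fin.mk_le_mk.mpr (Nat.zero_le _)) (Fin.mk_le_mk.mpr (Nat.zero_le _))
  · exact le_refl 0

lemma diagU_eq_sum {n : ℕ} (Y : Matrix (Fin n) (Fin n) ℝ) (l : ℕ) :
    diagU Y l = ∑ t ∈ Finset.range n, Ent Y t (t + l) := by
  unfold diagU
  have h1 : ∀ i : Fin n,
      (∑ j : Fin n, if (j : ℕ) = (i : ℕ) + l then Y i j else 0) = Ent Y i ((i : ℕ) + l) := by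
    intro i
    unfold Ent
    by_cases h : (i : ℕ) + l < n
    · rw [dif_pos ⟨i.isLt, h⟩, Finset.sum_eq_single (⟨(i : ℕ) + l, h⟩ : Fin n)]
      · simp
      · intro j _ hj
        rw [if_neg]
        intro hc
        exact hj (Fin.ext hc)
      · simp
    · rw [dif_neg (fun hh => h hh.2)]
      apply Finset.sum_eq_zero
      intro j _
      rw [if_neg]
      intro hc
      have := j.isLt
      omega
  rw [Finset.sum_congr rfl (fun i _ => h1 i)]
  exact Fin.sum_univ_eq_sum_range (fun t => Ent Y t (t + l)) n

lemma diagU_nat {n k : ℕ} {Y : Matrix (Fin n) (Fin n) ℝ} (hY : InM n k Y) (l : ℕ) :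
    ∑ t ∈ Finset.range n, Ent Y t (t + l) = ((n - l : ℕ) : ℝ) := by
  by_cases h : l < n
  · rw [← diagU_eq_sum]
    exact hY.2.2.1 ⟨l, h⟩
  · rw [show n - l = 0 from by omega, Nat.cast_zero]
    exact Finset.sum_eq_zero fun t ht => Ent_zero_right Y (by omega)

lemma boundU {n k : ℕ} {Y : Matrix (Fin n) (Fin n) ℝ} (hY : InM n k Y)
    {i j : ℕ} (hi : i < n) (hj : j < n) (hij : i ≤ j) :
    0 ≤ Ent Y i j - (if i = 0 then 0 else Ent Y (i - 1) j) ∧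
      Ent Y i j - (if i = 0 then 0 else Ent Y (i - 1) j) ≤ 1 := by
  set l := j - i with hl0
  have hl : i + l = j := by omega
  constructor
  · split_ifs with h
    · simpa using Ent_nonneg hY i j
    · have := Ent_mono hY hi hj (Nat.sub_le i 1) (le_refl j)
      linarith
  · have key : ∀ t ∈ Finset.range n,
        0 ≤ Ent Y t (t + l) - (if t = 0 then (0:ℝ) else Ent Y (t - 1) (t + l)) := by
      intro t ht
      simp only [Finset.mem_range] at ht
      split_ifs with h
      · simpa using Ent_nonneg hY t (t + l)
      · by_cases h2 : t + l < n
        · have := Ent_mono hY ht h2 (Nat.sub_le t 1) (le_refl (t + l))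
          linarith
        · rw [Ent_zero_right Y (by omega), Ent_zero_right Y (by omega)]
          norm_num
    have hsum : ∑ t ∈ Finset.range n,
        (Ent Y t (t + l) - (if t = 0 then (0:ℝ) else Ent Y (t - 1) (t + l))) = 1 := by
      rw [Finset.sum_sub_distrib, diagU_nat hY l]
      obtain ⟨m, rfl⟩ : ∃ m, n = m + 1 := ⟨n - 1, by omega⟩
      have e2 : ∑ t ∈ Finset.range (m + 1),
          (if t = 0 then (0:ℝ) else Ent Y (t - 1) (t + l)) =
          ∑ s ∈ Finset.range (m + 1), Ent Y s (s + (l + 1)) := by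
        rw [Finset.sum_range_succ' (fun t => if t = 0 then (0:ℝ) else Ent Y (t - 1) (t + l)) m]
        simp only [Nat.succ_ne_zero, if_false, Nat.add_sub_cancel, if_true, add_zero, reduceIte]
        rw [Finset.sum_range_succ (fun s => Ent Y s (s + (l + 1))) m,
          Ent_zero_right Y (show m + 1 ≤ m + (l + 1) by omega), add_zero]
        apply Finset.sum_congr rfl
        intro s _
        rw [show s + 1 + l = s + (l + 1) from by omega]
      rw [e2, diagU_nat hY (l + 1)]
      have hln : l < m + 1 := by omega
      rw [show m + 1 - l = (m + 1 - (l + 1)) + 1 from by omega]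
      push_cast
      ring
    have hle := Finset.single_le_sum key (Finset.mem_range.mpr hi)
    rw [hsum] at hle
    rwa [hl] at hle

/-- Key step: on the upper triangle (including the diagonal), `Z` and `W` agree. -/
lemma claimU {n k : ℕ} {Y Z W : Matrix (Fin n) (Fin n) ℝ}
    (hY : InM n k Y) (hZ : InM n k Z) (hW : InM n k W) (hint : IsIntegerMatrix Y)
    (hE : ∀ i j : ℕ, Ent Y i j = (Ent Z i j + Ent W i j) / 2) :
    ∀ i j : ℕ, i < n → j < n → i ≤ j → Ent Z i j = Ent W i j := by
  have hab : ∀ i j : ℕ, i < n → j < n → i ≤ j →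
      Ent Z i j - (if i = 0 then 0 else Ent Z (i - 1) j) =
      Ent W i j - (if i = 0 then 0 else Ent W (i - 1) j) := by
    intro i j hi hj hij
    obtain ⟨hz0, hz1⟩ := boundU hZ hi hj hij
    obtain ⟨hw0, hw1⟩ := boundU hW hi hj hij
    have hint1 : ∃ m : ℤ,
        Ent Y i j - (if i = 0 then (0:ℝ) else Ent Y (i - 1) j) = (m : ℝ) := by
      obtain ⟨m1, hm1⟩ := hint ⟨i, hi⟩ ⟨j, hj⟩
      by_cases h : i = 0
      · exact ⟨m1, by rw [if_pos h, Ent_eq Y hi hj, hm1]; ring⟩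
      · obtain ⟨m2, hm2⟩ := hint ⟨i - 1, by omega⟩ ⟨j, hj⟩
        refine ⟨m1 - m2, ?_⟩
        rw [if_neg h, Ent_eq Y hi hj, Ent_eq Y (show i - 1 < n from by omega) hj, hm1, hm2]
        push_cast
        ring
    obtain ⟨m, hm⟩ := hint1
    have havg : Ent Y i j - (if i = 0 then (0:ℝ) else Ent Y (i - 1) j) =
        ((Ent Z i j - (if i = 0 then 0 else Ent Z (i - 1) j)) +
         (Ent W i j - (if i = 0 then 0 else Ent W (i - 1) j))) / 2 := by
      by_cases h : i = 0
      · simp only [if_pos h]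
        rw [hE i j]
        ring
      · simp only [if_neg h]
        rw [hE i j, hE (i - 1) j]
        ring
    rw [hm] at havg
    have h0 : (0:ℝ) ≤ (m : ℝ) := by rw [havg]; linarith
    have h1 : (m : ℝ) ≤ 1 := by rw [havg]; linarith
    have h0' : (0:ℤ) ≤ m := by exact_mod_cast h0
    have h1' : m ≤ 1 := by exact_mod_cast h1
    have : m = 0 ∨ m = 1 := by omega
    rcases this with h | h
    · rw [h] at havg; push_cast at havg; linarith
    · rw [h] at havg; push_cast at havg; linarith
  intro i
  induction i with
  | zero =>
      intro j h0 hj hij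
      have := hab 0 j h0 hj hij
      simpa using this
  | succ i ih =>
      intro j hi hj hij
      have h1 := hab (i + 1) j hi hj hij
      have h2 := ih j (by omega) hj (by omega)
      simp only [Nat.succ_ne_zero, if_false, Nat.add_sub_cancel] at h1
      linarith

lemma diagU_transpose {n : ℕ} (Y : Matrix (Fin n) (Fin n) ℝ) (l : ℕ) :
    diagU Yᵀ l = diagL Y l := by
  unfold diagU diagL
  rw [Finset.sum_comm]
  simp [Matrix.transpose_apply]

lemma diagL_transpose {n : ℕ} (Y : Matrix (Fin n) (Fin n) ℝ) (l : ℕ) :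
    diagL Yᵀ l = diagU Y l := by
  unfold diagU diagL
  rw [Finset.sum_comm]
  simp [Matrix.transpose_apply]

lemma InM_transpose {n k : ℕ} {Y : Matrix (Fin n) (Fin n) ℝ} (hY : InM n k Y) :
    InM n k Yᵀ := by
  obtain ⟨h1, h2, h3, h4⟩ := hY
  refine ⟨fun i i' j j' hi hj => h1 j j' i i' hj hi, fun h => ?_, fun l => ?_, fun l => ?_⟩
  · exact h2 h
  · rw [diagU_transpose]; exact h4 l
  · rw [diagL_transpose]; exact h3 l

/-- Every lattice point of `M_n^k` is a vertex of `M_n^k`. -/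
theorem latticePoint_of_M_isVertex (n k : ℕ) (Y : Matrix (Fin n) (Fin n) ℝ)
    (hY : InM n k Y) (hint : IsIntegerMatrix Y) :
    ∀ Z W : Matrix (Fin n) (Fin n) ℝ, InM n k Z → InM n k W →
      Y = (1 / 2 : ℝ) • (Z + W) → Z = W := by
  intro Z W hZ hW hmid
  have hE : ∀ i j : ℕ, Ent Y i j = (Ent Z i j + Ent W i j) / 2 := by
    intro i j
    unfold Ent
    split_ifs with h
    · rw [hmid]
      simp only [Matrix.smul_apply, Matrix.add_apply, smul_eq_mul]
      ring
    · norm_num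
  have hEt : ∀ i j : ℕ, Ent Yᵀ i j = (Ent Zᵀ i j + Ent Wᵀ i j) / 2 := by
    intro i j
    rw [Ent_transpose, Ent_transpose, Ent_transpose]
    exact hE j i
  have hintt : IsIntegerMatrix Yᵀ := fun i j => hint j i
  have cU := claimU hY hZ hW hint hE
  have cL := claimU (InM_transpose hY) (InM_transpose hZ) (InM_transpose hW) hintt hEt
  funext i j
  by_cases h : (i : ℕ) ≤ (j : ℕ)
  · have := cU i j i.isLt j.isLt h
    rw [Ent_eq Z i.isLt j.isLt, Ent_eq W i.isLt j.isLt] at this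
    simpa using this
  · have := cL j i j.isLt i.isLt (by omega)
    rw [Ent_transpose, Ent_transpose] at this
    rw [Ent_eq Z i.isLt j.isLt, Ent_eq W i.isLt j.isLt] at this
    simpa using this
end

section
/- The polytope M_n^k is integrally equivalent to the Gelfand–Tsetlin polytope GT_{λ,μ} with λ = (k,...,k,0,...,0) (k repeated n times, then 0 repeated n times) and μ = (1,...,1,k−1,...,k−1) (1 repeated n times, then k−1 repeated n times). -/
/-! The affine map writes a matrix `Y` of `M_n^k`, rotated, into the block `i < n ≤ j` of a
pattern of size `2n` and fills the triangle `j < n` with `k` and the triangle `n ≤ i` with `0`.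
Monotonicity and the shape `(k^n, 0^n)` force exactly these values on the two triangles, so
every pattern of `GT_{λ,μ}` arises this way. The diagonal sum `j - i = d` of the pattern is
`k (n - d)` plus the diagonal sum `b - a = d - n` of `Y`; telescoping the content conditions
shows that the content is `μ` iff `Y` has the diagonal sums `n - |t|` of the all-ones matrix,
which are the diagonal conditions of `M_n^k`. The entries of the pattern are `k`, `0` or entries
of `Y`, so the map also matches the integral points. -/

open scoped BigOperators

/-- Membership in the Gelfand–Tsetlin polytope `GT_{λ,μ}` of size `N`: triangular
arrays (indexed by pairs `i ≤ j`) weakly decreasing along rows and down columns,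
with shape (main diagonal) `λ` and content (successive diagonal-sum differences)
`μ`. -/
def InGT (N : ℕ) (lam mu : Fin N → ℝ)
    (g : {p : Fin N × Fin N // p.1 ≤ p.2} → ℝ) : Prop :=
  (∀ p q : {p : Fin N × Fin N // p.1 ≤ p.2},
      p.1.1 ≤ q.1.1 → p.1.2 ≤ q.1.2 → g q ≤ g p) ∧
  (∀ i : Fin N, g ⟨(i, i), le_refl i⟩ = lam i) ∧
  (∀ m : Fin N,
      (∑ p : {p : Fin N × Fin N // p.1 ≤ p.2},
          if ((p.1.2 : ℕ) : ℤ) - ((p.1.1 : ℕ) : ℤ) = (N : ℤ) - 1 - (m : ℕ) then g p else 0) -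
      (∑ p : {p : Fin N × Fin N // p.1 ≤ p.2},
          if ((p.1.2 : ℕ) : ℤ) - ((p.1.1 : ℕ) : ℤ) = (N : ℤ) - (m : ℕ) then g p else 0)
        = mu m)

namespace Matrix

variable {R : Type*} [AddCommMonoid R] {m n : ℕ}

def diagSum (M : Matrix (Fin m) (Fin n) R) (t : ℤ) : R :=
  ∑ q : Fin m × Fin n, if (q.2 : ℤ) - q.1 = t then M q.1 q.2 else 0

lemma diagSum_add (M N : Matrix (Fin m) (Fin n) R) (t : ℤ) :
    diagSum (M + N) t = diagSum M t + diagSum N t := by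
  simp only [diagSum, add_apply, ← Finset.sum_add_distrib, ite_add_ite, add_zero]

lemma diagSum_smul {S : Type*} [Monoid S] [DistribMulAction S R] (c : S)
    (M : Matrix (Fin m) (Fin n) R) (t : ℤ) : diagSum (c • M) t = c • diagSum M t := by
  simp only [diagSum, smul_apply, Finset.smul_sum, smul_ite, smul_zero]

lemma diagSum_eq_zero (M : Matrix (Fin m) (Fin n) R) {t : ℤ} (ht : t ≤ -m ∨ n ≤ t) :
    diagSum M t = 0 :=
  Finset.sum_eq_zero fun q _ => if_neg (by have := q.1.2; have := q.2.2; omega)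

lemma diagSum_of_one (n : ℕ) (t : ℤ) :
    diagSum (of fun _ _ : Fin n => (1 : ℝ)) t = ((n - t.natAbs : ℕ) : ℝ) := by
  have h := Fintype.sum_of_injective
    (fun i : Fin (n - t.natAbs) =>
      ((⟨i + (-t).toNat, by omega⟩ : Fin n), (⟨i + t.toNat, by omega⟩ : Fin n)))
    (fun i i' h => by simpa [Fin.ext_iff] using congrArg (fun q => (q.1 : ℕ)) h)
    (fun _ => (1 : ℝ)) (fun q : Fin n × Fin n => if (q.2 : ℤ) - q.1 = t then (1 : ℝ) else 0)
    (fun q hq => if_neg fun h =>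
      hq ⟨⟨q.1 - (-t).toNat, by omega⟩, by ext <;> simp only <;> omega⟩)
    (fun i => (if_pos (by simp only; omega)).symm)
  simpa [diagSum] using h.symm

end Matrix

lemma Set.BijOn.affineSpan_inter {𝕜 V₁ P₁ V₂ P₂ : Type*} [Ring 𝕜] [AddCommGroup V₁]
    [Module 𝕜 V₁] [AddTorsor V₁ P₁] [AddCommGroup V₂] [Module 𝕜 V₂] [AddTorsor V₂ P₂]
    {f : P₁ →ᵃ[𝕜] P₂} {s : Set P₁} {t : Set P₂} (h : Set.BijOn f s t)
    (hf : Function.Injective f) {S : Set P₁} {T : Set P₂} (hST : f ⁻¹' T = S) :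
    Set.BijOn f ((affineSpan 𝕜 s : Set P₁) ∩ S) ((affineSpan 𝕜 t : Set P₂) ∩ T) := by
  rw [← h.image_eq, ← AffineSubspace.map_span, AffineSubspace.coe_map, ← hST,
    ← Set.image_inter_preimage]
  exact hf.injOn.bijOn_image

open Matrix

namespace GelfandTsetlin

abbrev GTIndex (N : ℕ) := {p : Fin N × Fin N // p.1 ≤ p.2}

def gtDiag {N : ℕ} (g : GTIndex N → ℝ) (d : ℤ) : ℝ :=
  ∑ p : GTIndex N, if ((p.1.2 : ℕ) : ℤ) - ((p.1.1 : ℕ) : ℤ) = d then g p else 0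

lemma gtDiag_eq_diagSum {N : ℕ} (M : Matrix (Fin N) (Fin N) ℝ) {d : ℤ} (hd : 0 ≤ d) :
    gtDiag (fun p => M p.1.1 p.1.2) d = M.diagSum d :=
  Fintype.sum_of_injective Subtype.val Subtype.val_injective _ _
    (fun q hq => if_neg fun h => hq ⟨⟨q, Fin.le_def.2 (by omega)⟩, rfl⟩) (fun _ => rfl)

def HasContent {N : ℕ} (g : GTIndex N → ℝ) (mu : Fin N → ℝ) : Prop :=
  ∀ m : Fin N, gtDiag g ((N : ℤ) - 1 - (m : ℕ)) - gtDiag g ((N : ℤ) - (m : ℕ)) = mu m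

def GTAntitone {N : ℕ} (g : GTIndex N → ℝ) : Prop :=
  ∀ p q : GTIndex N, p.1.1 ≤ q.1.1 → p.1.2 ≤ q.1.2 → g q ≤ g p

lemma GTAntitone.le_and_le {N : ℕ} {g : GTIndex N → ℝ} (hg : GTAntitone g) (p : GTIndex N) :
    g ⟨(p.1.2, p.1.2), le_rfl⟩ ≤ g p ∧ g p ≤ g ⟨(p.1.1, p.1.1), le_rfl⟩ :=
  ⟨hg p _ p.2 le_rfl, hg _ p le_rfl p.2⟩

variable {n : ℕ}

def mirror (a b : Fin n) : GTIndex (2 * n) :=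
  ⟨(⟨n - 1 - b, by omega⟩, ⟨2 * n - 1 - a, by omega⟩), Fin.le_def.2 (by simp only; omega)⟩

lemma mirror_injective : Function.Injective fun q : Fin n × Fin n => mirror q.1 q.2 := by
  intro q q' h
  simp only [mirror, Subtype.mk.injEq, Prod.mk.injEq, Fin.mk.injEq] at h
  ext <;> omega

lemma exists_mirror_eq (q : Fin (2 * n) × Fin (2 * n)) (h₁ : (q.1 : ℕ) < n)
    (h₂ : n ≤ (q.2 : ℕ)) : ∃ a b : Fin n, (mirror a b).1 = q :=
  ⟨⟨2 * n - 1 - q.2, by omega⟩, ⟨n - 1 - q.1, by omega⟩, by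
    ext <;> simp only [mirror] <;> omega⟩

lemma GTIndex.lt_or_le_or_mirror (p : GTIndex (2 * n)) :
    (p.1.2 : ℕ) < n ∨ n ≤ (p.1.1 : ℕ) ∨ ∃ a b : Fin n, mirror a b = p := by
  by_cases h₂ : (p.1.2 : ℕ) < n
  · exact Or.inl h₂
  by_cases h₁ : n ≤ (p.1.1 : ℕ)
  · exact Or.inr (Or.inl h₁)
  obtain ⟨a, b, h⟩ := exists_mirror_eq p.1 (by omega) (by omega)
  exact Or.inr (Or.inr ⟨a, b, Subtype.ext h⟩)

def topLeft (n : ℕ) : Matrix (Fin (2 * n)) (Fin (2 * n)) ℝ :=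
  of fun _ j => if (j : ℕ) < n then 1 else 0

def embedMirror (n : ℕ) :
    Matrix (Fin n) (Fin n) ℝ →ₗ[ℝ] Matrix (Fin (2 * n)) (Fin (2 * n)) ℝ where
  toFun Y := of fun i j =>
    if h : (i : ℕ) < n ∧ n ≤ (j : ℕ) then Y ⟨2 * n - 1 - j, by omega⟩ ⟨n - 1 - i, by omega⟩
    else 0
  map_add' Y Z := by ext; simp only [of_apply, Matrix.add_apply]; split_ifs <;> simp
  map_smul' c Y := by ext; simp only [of_apply, Matrix.smul_apply]; split_ifs <;> simp

def restrictGT (N : ℕ) : Matrix (Fin N) (Fin N) ℝ →ₗ[ℝ] (GTIndex N → ℝ) where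
  toFun M p := M p.1.1 p.1.2
  map_add' _ _ := rfl
  map_smul' _ _ := rfl

noncomputable def toGT (n : ℕ) (k : ℝ) :
    Matrix (Fin n) (Fin n) ℝ →ᵃ[ℝ] (GTIndex (2 * n) → ℝ) :=
  (restrictGT (2 * n) ∘ₗ embedMirror n).toAffineMap +
    AffineMap.const ℝ _ (restrictGT (2 * n) (k • topLeft n))

lemma toGT_apply (k : ℝ) (Y : Matrix (Fin n) (Fin n) ℝ) (p : GTIndex (2 * n)) :
    toGT n k Y p = (k • topLeft n + embedMirror n Y) p.1.1 p.1.2 :=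
  add_comm _ _

lemma toGT_apply_of_lt (k : ℝ) (Y : Matrix (Fin n) (Fin n) ℝ) {p : GTIndex (2 * n)}
    (h : (p.1.2 : ℕ) < n) : toGT n k Y p = k := by
  simp [toGT_apply, topLeft, embedMirror, h]

lemma toGT_apply_of_le (k : ℝ) (Y : Matrix (Fin n) (Fin n) ℝ) {p : GTIndex (2 * n)}
    (h : n ≤ (p.1.1 : ℕ)) : toGT n k Y p = 0 := by
  have := Fin.le_def.1 p.2
  simp [toGT_apply, topLeft, embedMirror, if_neg (show ¬ (p.1.2 : ℕ) < n by omega),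
    dif_neg (show ¬ ((p.1.1 : ℕ) < n ∧ n ≤ p.1.2) by omega)]

lemma embedMirror_mirror (Y : Matrix (Fin n) (Fin n) ℝ) (a b : Fin n) :
    embedMirror n Y (mirror a b).1.1 (mirror a b).1.2 = Y a b := by
  simp only [embedMirror, mirror, of_apply, LinearMap.coe_mk, AddHom.coe_mk]
  rw [dif_pos ⟨by omega, by omega⟩]
  congr <;> omega

lemma toGT_mirror (k : ℝ) (Y : Matrix (Fin n) (Fin n) ℝ) (a b : Fin n) :
    toGT n k Y (mirror a b) = Y a b := by
  rw [toGT_apply, Matrix.add_apply, embedMirror_mirror, Matrix.smul_apply, topLeft, of_apply,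
    if_neg (by simp only [mirror]; omega), smul_zero, zero_add]

lemma diagSum_topLeft {d : ℤ} (hd : 0 ≤ d) :
    (topLeft n).diagSum d = (of fun _ _ : Fin n => (1 : ℝ)).diagSum d := by
  refine (Fintype.sum_of_injective (Prod.map (Fin.castLE (by omega)) (Fin.castLE (by omega)))
    ((Fin.castLE_injective _).prodMap (Fin.castLE_injective _)) _ _ (fun q hq => ?_)
    (fun q => by simp [topLeft])).symm
  simp only [topLeft, of_apply]
  split_ifs with h₁ h₂
  · exact absurd ⟨(⟨q.1, by omega⟩, ⟨q.2, h₂⟩), rfl⟩ hq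
  all_goals rfl

lemma diagSum_embedMirror (Y : Matrix (Fin n) (Fin n) ℝ) (t : ℤ) :
    (embedMirror n Y).diagSum t = Y.diagSum (t - n) := by
  refine (Fintype.sum_of_injective (fun q : Fin n × Fin n => (mirror q.1 q.2).1)
    (Subtype.val_injective.comp mirror_injective) _ _ (fun q hq => ?_) (fun q => ?_)).symm
  · simp only [embedMirror, of_apply, LinearMap.coe_mk, AddHom.coe_mk]
    split_ifs with h₁ h₂
    · obtain ⟨a, b, h⟩ := exists_mirror_eq q h₂.1 h₂.2
      exact absurd ⟨(a, b), h⟩ hq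
    all_goals rfl
  · rw [embedMirror_mirror]
    exact if_congr (by simp only [mirror]; omega) rfl rfl

lemma gtDiag_toGT (k : ℝ) (Y : Matrix (Fin n) (Fin n) ℝ) (d : ℕ) :
    gtDiag (toGT n k Y) d = k * ((n - d : ℕ) : ℝ) + Y.diagSum (d - n) := by
  rw [show toGT n k Y = fun p => (k • topLeft n + embedMirror n Y) p.1.1 p.1.2 from
      funext (toGT_apply k Y), gtDiag_eq_diagSum _ (Int.natCast_nonneg d), diagSum_add,
    diagSum_smul, diagSum_topLeft (Int.natCast_nonneg d), diagSum_of_one, diagSum_embedMirror,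
    Int.natAbs_natCast, smul_eq_mul]

lemma content_toGT (k : ℝ) (Y : Matrix (Fin n) (Fin n) ℝ)
    (hY : ∀ t, Y.diagSum t = (of fun _ _ : Fin n => (1 : ℝ)).diagSum t) :
    HasContent (toGT n k Y) fun m => if (m : ℕ) < n then 1 else k - 1 := by
  intro m
  have hm := m.2
  rw [show ((2 * n : ℕ) : ℤ) - 1 - (m : ℕ) = ((2 * n - 1 - m : ℕ) : ℤ) by omega,
    show ((2 * n : ℕ) : ℤ) - (m : ℕ) = ((2 * n - m : ℕ) : ℤ) by omega,
    gtDiag_toGT, gtDiag_toGT, hY, hY, diagSum_of_one, diagSum_of_one]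
  dsimp only
  split_ifs with h
  · rw [show n - (2 * n - 1 - m) = 0 by omega, show n - (2 * n - m) = 0 by omega,
      show n - (((2 * n - 1 - m : ℕ) : ℤ) - n).natAbs = m + 1 by omega,
      show n - (((2 * n - m : ℕ) : ℤ) - n).natAbs = m by omega]
    push_cast; ring
  · rw [show n - (2 * n - 1 - m) = n - (2 * n - m) + 1 by omega,
      show n - (((2 * n - m : ℕ) : ℤ) - n).natAbs =
        n - (((2 * n - 1 - m : ℕ) : ℤ) - n).natAbs + 1 by omega]
    push_cast; ring

lemma diagSum_eq_of_content (k : ℝ) (Y : Matrix (Fin n) (Fin n) ℝ)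
    (hY : HasContent (toGT n k Y) fun m => if (m : ℕ) < n then 1 else k - 1) (t : ℤ) :
    Y.diagSum t = (of fun _ _ : Fin n => (1 : ℝ)).diagSum t := by
  set J := of fun _ _ : Fin n => (1 : ℝ)
  by_cases ht : -n ≤ t ∧ t ≤ n
  swap
  · rw [diagSum_eq_zero, diagSum_eq_zero] <;> omega
  -- The pattern of `J` has the same content, and the contributions of the `k`-block cancel.
  have hstep (d : ℕ) (hd : d < 2 * n) : Y.diagSum (d - n) - J.diagSum (d - n) =
      Y.diagSum (d - n + 1) - J.diagSum (d - n + 1) := by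
    have hY' := hY ⟨2 * n - 1 - d, by omega⟩
    have hJ := content_toGT k J (fun _ => rfl) ⟨2 * n - 1 - d, by omega⟩
    rw [show ((2 * n : ℕ) : ℤ) - 1 - ((2 * n - 1 - d : ℕ) : ℤ) = (d : ℤ) by omega,
      show ((2 * n : ℕ) : ℤ) - ((2 * n - 1 - d : ℕ) : ℤ) = ((d + 1 : ℕ) : ℤ) by omega,
      gtDiag_toGT, gtDiag_toGT, show ((d + 1 : ℕ) : ℤ) - n = d - n + 1 by push_cast; ring]
      at hY' hJ
    linarith
  obtain ⟨h₁, h₂⟩ := ht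
  revert h₁
  induction t, h₂ using Int.leInductionDown with
  | base => intro; rw [diagSum_eq_zero, diagSum_eq_zero] <;> omega
  | pred t _ ih =>
    intro h
    have := hstep (t - 1 + n).toNat (by omega)
    rw [show (((t - 1 + n).toNat : ℕ) : ℤ) - n = t - 1 by omega, sub_add_cancel] at this
    linarith [ih (by omega)]

lemma diagU_eq_diagSum (Y : Matrix (Fin n) (Fin n) ℝ) (l : ℕ) : diagU Y l = Y.diagSum l := by
  rw [diagSum, Fintype.sum_prod_type]
  exact Finset.sum_congr rfl fun i _ => Finset.sum_congr rfl fun j _ =>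
    if_congr (by dsimp only; omega) rfl rfl

lemma diagL_eq_diagSum (Y : Matrix (Fin n) (Fin n) ℝ) (l : ℕ) : diagL Y l = Y.diagSum (-l) := by
  rw [diagSum, Fintype.sum_prod_type]
  exact Finset.sum_congr rfl fun i _ => Finset.sum_congr rfl fun j _ =>
    if_congr (by dsimp only; omega) rfl rfl

lemma diagU_diagL_iff (Y : Matrix (Fin n) (Fin n) ℝ) :
    ((∀ l : Fin n, diagU Y l = ((n - l : ℕ) : ℝ)) ∧
        (∀ l : Fin n, diagL Y l = ((n - l : ℕ) : ℝ))) ↔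
      ∀ t, Y.diagSum t = (of fun _ _ : Fin n => (1 : ℝ)).diagSum t := by
  simp only [diagU_eq_diagSum, diagL_eq_diagSum, diagSum_of_one]
  refine ⟨fun ⟨hU, hL⟩ t => ?_, fun h => ⟨fun l => by simp [h], fun l => by simp [h]⟩⟩
  by_cases ht : t.natAbs < n
  · obtain ⟨l, rfl | rfl⟩ := Int.eq_nat_or_neg t
    · simpa using hU ⟨l, by omega⟩
    · simpa using hL ⟨l, by omega⟩
  · rw [diagSum_eq_zero _ (by omega), Nat.sub_eq_zero_of_le (by omega), Nat.cast_zero]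

lemma toGT_mem_Icc {k : ℕ} {Y : Matrix (Fin n) (Fin n) ℝ}
    (hY : ∀ a b, Y a b ∈ Set.Icc 0 (k : ℝ)) (p : GTIndex (2 * n)) :
    toGT n k Y p ∈ Set.Icc 0 (k : ℝ) := by
  rcases p.lt_or_le_or_mirror with hp | hp | ⟨a, b, rfl⟩
  · rw [toGT_apply_of_lt _ _ hp]
    exact ⟨Nat.cast_nonneg k, le_rfl⟩
  · rw [toGT_apply_of_le _ _ hp]
    exact ⟨le_rfl, Nat.cast_nonneg k⟩
  · rw [toGT_mirror]
    exact hY a b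

lemma gtAntitone_toGT_iff (k : ℕ) (Y : Matrix (Fin n) (Fin n) ℝ) :
    GTAntitone (toGT n k Y) ↔ (∀ i i' j j' : Fin n, i ≤ i' → j ≤ j' → Y i j ≤ Y i' j') ∧
      ∀ h : 0 < n, 0 ≤ Y ⟨0, h⟩ ⟨0, h⟩ ∧ Y ⟨n - 1, by omega⟩ ⟨n - 1, by omega⟩ ≤ k := by
  constructor
  · intro hg
    refine ⟨fun i i' j j' hi hj => ?_, fun h => ⟨?_, ?_⟩⟩
    · rw [← toGT_mirror k Y, ← toGT_mirror k Y]
      exact hg _ _ (Fin.mk_le_mk.2 (by rw [Fin.le_def] at hj; omega))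
        (Fin.mk_le_mk.2 (by rw [Fin.le_def] at hi; omega))
    · rw [← toGT_mirror k Y]
      exact (toGT_apply_of_le _ _ (by simp only [mirror]; omega)).symm.trans_le
        (hg.le_and_le _).1
    · rw [← toGT_mirror k Y]
      exact (hg.le_and_le _).2.trans_eq (toGT_apply_of_lt _ _ (by simp only [mirror]; omega))
  · rintro ⟨hmono, hcorner⟩ p q hpq₁ hpq₂
    rw [Fin.le_def] at hpq₁ hpq₂
    have hY (a b : Fin n) : Y a b ∈ Set.Icc 0 (k : ℝ) :=
      ⟨(hcorner (by omega)).1.trans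
          (hmono _ _ _ _ (Fin.le_def.2 (Nat.zero_le _)) (Fin.le_def.2 (Nat.zero_le _))),
        (hmono _ _ _ _ (Fin.le_def.2 (by dsimp only; omega))
          (Fin.le_def.2 (by dsimp only; omega))).trans (hcorner (by omega)).2⟩
    rcases p.lt_or_le_or_mirror with hp | hp | ⟨a, b, rfl⟩
    · rw [toGT_apply_of_lt _ _ hp]
      exact (toGT_mem_Icc hY q).2
    · rw [toGT_apply_of_le _ _ (by omega)]
      exact (toGT_mem_Icc hY _).1
    rcases q.lt_or_le_or_mirror with hq | hq | ⟨a', b', rfl⟩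
    · simp only [mirror] at hpq₂; omega
    · rw [toGT_apply_of_le _ _ hq]
      exact (toGT_mem_Icc hY _).1
    · simp only [mirror] at hpq₁ hpq₂
      rw [toGT_mirror, toGT_mirror]
      exact hmono _ _ _ _ (Fin.le_def.2 (by omega)) (Fin.le_def.2 (by omega))

lemma toGT_diag (k : ℝ) (Y : Matrix (Fin n) (Fin n) ℝ) (i : Fin (2 * n)) :
    toGT n k Y ⟨(i, i), le_rfl⟩ = if (i : ℕ) < n then k else 0 := by
  split_ifs with h
  · exact toGT_apply_of_lt _ _ h
  · exact toGT_apply_of_le _ _ (not_lt.1 h)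

lemma inGT_toGT_iff (k : ℕ) (Y : Matrix (Fin n) (Fin n) ℝ) :
    InGT (2 * n) (fun i => if (i : ℕ) < n then (k : ℝ) else 0)
      (fun i => if (i : ℕ) < n then 1 else (k : ℝ) - 1) (toGT n k Y) ↔ InM n k Y := by
  rw [InM, ← and_assoc, ← gtAntitone_toGT_iff, diagU_diagL_iff]
  exact ⟨fun ⟨hg, _, hc⟩ => ⟨hg, diagSum_eq_of_content k Y hc⟩,
    fun ⟨hg, hY⟩ => ⟨hg, toGT_diag k Y, content_toGT k Y hY⟩⟩

lemma toGT_injective (k : ℝ) : Function.Injective (toGT n k) := fun Y Z h => by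
  ext a b
  rw [← toGT_mirror k Y, h, toGT_mirror]

def ofGT (g : GTIndex (2 * n) → ℝ) : Matrix (Fin n) (Fin n) ℝ :=
  of fun a b => g (mirror a b)

lemma toGT_ofGT {k : ℝ} {g : GTIndex (2 * n) → ℝ} (hg : GTAntitone g)
    (hdiag : ∀ i : Fin (2 * n), g ⟨(i, i), le_rfl⟩ = if (i : ℕ) < n then k else 0) :
    toGT n k (ofGT g) = g := by
  funext p
  have hp₁₂ := Fin.le_def.1 p.2
  have hbounds := hg.le_and_le p
  rw [hdiag, hdiag] at hbounds
  rcases p.lt_or_le_or_mirror with hp | hp | ⟨a, b, rfl⟩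
  · rw [if_pos hp, if_pos (by omega)] at hbounds
    rw [toGT_apply_of_lt _ _ hp]
    exact le_antisymm hbounds.1 hbounds.2
  · rw [if_neg (by omega), if_neg (by omega)] at hbounds
    rw [toGT_apply_of_le _ _ hp]
    exact le_antisymm hbounds.1 hbounds.2
  · exact toGT_mirror k _ a b

lemma isInteger_toGT_iff (k : ℕ) (Y : Matrix (Fin n) (Fin n) ℝ) :
    (∀ p, ∃ m : ℤ, toGT n k Y p = m) ↔ IsIntegerMatrix Y := by
  refine ⟨fun h a b => toGT_mirror (k : ℝ) Y a b ▸ h (mirror a b), fun hY p => ?_⟩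
  rcases p.lt_or_le_or_mirror with hp | hp | ⟨a, b, rfl⟩
  · exact ⟨k, by rw [toGT_apply_of_lt _ _ hp, Int.cast_natCast]⟩
  · exact ⟨0, by rw [toGT_apply_of_le _ _ hp, Int.cast_zero]⟩
  · rw [toGT_mirror]
    exact hY a b

lemma bijOn_toGT (k : ℕ) : Set.BijOn (toGT n k) {Y | InM n k Y}
    {g | InGT (2 * n) (fun i => if (i : ℕ) < n then (k : ℝ) else 0)
      (fun i => if (i : ℕ) < n then 1 else (k : ℝ) - 1) g} := by
  refine ⟨fun Y hY => (inGT_toGT_iff k Y).2 hY, (toGT_injective _).injOn, fun g hg => ?_⟩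
  have hg' := toGT_ofGT hg.1 hg.2.1
  exact ⟨ofGT g, (inGT_toGT_iff k _).1 (hg'.symm ▸ hg), hg'⟩

end GelfandTsetlin

open GelfandTsetlin

theorem M_integrallyEquivalent_GT_general (n k : ℕ) :
    ∃ A : Matrix (Fin n) (Fin n) ℝ →ᵃ[ℝ]
        ({p : Fin (2 * n) × Fin (2 * n) // p.1 ≤ p.2} → ℝ),
      Set.BijOn A {Y | InM n k Y}
        {g | InGT (2 * n) (fun i => if (i : ℕ) < n then (k : ℝ) else 0)
              (fun i => if (i : ℕ) < n then 1 else (k : ℝ) - 1) g} ∧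
      Set.BijOn A
        ((affineSpan ℝ {Y | InM n k Y} : Set (Matrix (Fin n) (Fin n) ℝ)) ∩
          {Y | IsIntegerMatrix Y})
        ((affineSpan ℝ {g | InGT (2 * n) (fun i => if (i : ℕ) < n then (k : ℝ) else 0)
              (fun i => if (i : ℕ) < n then 1 else (k : ℝ) - 1) g} :
            Set ({p : Fin (2 * n) × Fin (2 * n) // p.1 ≤ p.2} → ℝ)) ∩
          {g | ∀ p, ∃ m : ℤ, g p = (m : ℝ)}) := by
  exact ⟨toGT n k, bijOn_toGT k,
    (bijOn_toGT k).affineSpan_inter (toGT_injective _) (Set.ext fun Y => isInteger_toGT_iff k Y)⟩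

/-- `M_n^k` is integrally equivalent to `GT_{λ,μ}` with `λ = (k^n, 0^n)` and
`μ = (1^n, (k-1)^n)`: some affine map restricts to a bijection between the polytopes
and to a bijection between the lattice points of their affine spans. -/
theorem M_integrallyEquivalent_GT (n k : ℕ) (hn : 0 < n) (hk : 1 ≤ k) (hkn : k ≤ n) :
    ∃ A : Matrix (Fin n) (Fin n) ℝ →ᵃ[ℝ]
        ({p : Fin (2 * n) × Fin (2 * n) // p.1 ≤ p.2} → ℝ),
      Set.BijOn A {Y | InM n k Y}
        {g | InGT (2 * n) (fun i => if (i : ℕ) < n then (k : ℝ) else 0)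
              (fun i => if (i : ℕ) < n then 1 else (k : ℝ) - 1) g} ∧
      Set.BijOn A
        ((affineSpan ℝ {Y | InM n k Y} : Set (Matrix (Fin n) (Fin n) ℝ)) ∩
          {Y | IsIntegerMatrix Y})
        ((affineSpan ℝ {g | InGT (2 * n) (fun i => if (i : ℕ) < n then (k : ℝ) else 0)
              (fun i => if (i : ℕ) < n then 1 else (k : ℝ) - 1) g} :
            Set ({p : Fin (2 * n) × Fin (2 * n) // p.1 ≤ p.2} → ℝ)) ∩
          {g | ∀ p, ∃ m : ℤ, g p = (m : ℝ)}) :=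
  M_integrallyEquivalent_GT_general n k
end

section
/- For 2×2 matrices, the map ρ sending (x_{11}, x_{12}, x_{21}, x_{22}) to the matrix with entries y_{11} = min(x_{12}, x_{21}), y_{12} = x_{11} + x_{12}, y_{21} = x_{11} + x_{21}, y_{22} = x_{11} + x_{22} + max(x_{12}, x_{21}) is a bijection from the set of 2×2 nonnegative real matrices onto the set of 2×2 nonnegative real matrices that are weakly increasing along rows and columns, and it restricts to a bijection on integer matrices. -/
set_option linter.unreachableTactic false
set_option linter.unusedTactic false

/-- The 2×2 piecewise-linear RSK map. -/
noncomputable def rho2 (X : Matrix (Fin 2) (Fin 2) ℝ) : Matrix (Fin 2) (Fin 2) ℝ :=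
  !![min (X 0 1) (X 1 0), X 0 0 + X 0 1;
     X 0 0 + X 1 0, X 0 0 + X 1 1 + max (X 0 1) (X 1 0)]

noncomputable def sigma2 (Y : Matrix (Fin 2) (Fin 2) ℝ) : Matrix (Fin 2) (Fin 2) ℝ :=
  !![min (Y 0 1) (Y 1 0) - Y 0 0, Y 0 1 - min (Y 0 1) (Y 1 0) + Y 0 0;
     Y 1 0 - min (Y 0 1) (Y 1 0) + Y 0 0, Y 1 1 - max (Y 0 1) (Y 1 0)]

lemma sigma_rho (X : Matrix (Fin 2) (Fin 2) ℝ) (h : ∀ i j, 0 ≤ X i j) :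
    sigma2 (rho2 X) = X := by
  have h00 := h 0 0
  ext i j
  fin_cases i <;> fin_cases j <;>
    simp [sigma2, rho2, min_add_add_left, max_add_add_left] <;>
    rcases le_total (X 0 1) (X 1 0) with hc | hc <;>
    simp [min_eq_left, min_eq_right, max_eq_left, max_eq_right, hc] <;> try ring

lemma rho_sigma (Y : Matrix (Fin 2) (Fin 2) ℝ)
    (h : 0 ≤ Y 0 0 ∧ Y 0 0 ≤ Y 0 1 ∧ Y 0 0 ≤ Y 1 0 ∧ Y 0 1 ≤ Y 1 1 ∧ Y 1 0 ≤ Y 1 1) :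
    rho2 (sigma2 Y) = Y := by
  obtain ⟨h0, h1, h2, h3, h4⟩ := h
  ext i j
  fin_cases i <;> fin_cases j <;>
    simp [sigma2, rho2] <;>
    rcases le_total (Y 0 1) (Y 1 0) with hc | hc <;>
    simp [min_eq_left, min_eq_right, max_eq_left, max_eq_right, hc, hc.trans, sub_add_cancel] <;>
    first
      | try ring
      | (rw [min_eq_left (by linarith), max_eq_right (by linarith)] <;> ring)
      | (rw [min_eq_right (by linarith), max_eq_left (by linarith)] <;> ring)

lemma rho_maps (X : Matrix (Fin 2) (Fin 2) ℝ) (h : ∀ i j, 0 ≤ X i j) :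
    0 ≤ rho2 X 0 0 ∧ rho2 X 0 0 ≤ rho2 X 0 1 ∧ rho2 X 0 0 ≤ rho2 X 1 0 ∧
      rho2 X 0 1 ≤ rho2 X 1 1 ∧ rho2 X 1 0 ≤ rho2 X 1 1 := by
  have h00 := h 0 0; have h01 := h 0 1; have h10 := h 1 0; have h11 := h 1 1
  rcases le_total (X 0 1) (X 1 0) with hc | hc <;>
    simp [rho2, min_eq_left, min_eq_right, max_eq_left, max_eq_right, hc] <;>
    refine ⟨by linarith, by linarith, by linarith, by linarith, by linarith⟩

lemma sigma_maps (Y : Matrix (Fin 2) (Fin 2) ℝ)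
    (h : 0 ≤ Y 0 0 ∧ Y 0 0 ≤ Y 0 1 ∧ Y 0 0 ≤ Y 1 0 ∧ Y 0 1 ≤ Y 1 1 ∧ Y 1 0 ≤ Y 1 1) :
    ∀ i j, 0 ≤ sigma2 Y i j := by
  obtain ⟨h0, h1, h2, h3, h4⟩ := h
  intro i j
  rcases le_total (Y 0 1) (Y 1 0) with hc | hc <;>
    fin_cases i <;> fin_cases j <;>
    simp [sigma2, min_eq_left, min_eq_right, max_eq_left, max_eq_right, hc] <;>
    first | linarith | (constructor <;> linarith)

lemma rho_int (X : Matrix (Fin 2) (Fin 2) ℝ) (h : ∀ i j, ∃ m : ℤ, X i j = (m : ℝ)) :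
    ∀ i j, ∃ m : ℤ, rho2 X i j = (m : ℝ) := by
  obtain ⟨a, ha⟩ := h 0 0; obtain ⟨b, hb⟩ := h 0 1
  obtain ⟨c, hc⟩ := h 1 0; obtain ⟨d, hd⟩ := h 1 1
  intro i j
  fin_cases i <;> fin_cases j <;> simp [rho2, ha, hb, hc, hd]
  · exact ⟨min b c, by push_cast [min_def]; split_ifs with h <;> simp_all [min_def]⟩
  · exact ⟨a + b, by push_cast; ring⟩
  · exact ⟨a + c, by push_cast; ring⟩
  · exact ⟨a + d + max b c, by push_cast [max_def]; split_ifs with h <;> simp_all [max_def]⟩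

lemma sigma_int (Y : Matrix (Fin 2) (Fin 2) ℝ) (h : ∀ i j, ∃ m : ℤ, Y i j = (m : ℝ)) :
    ∀ i j, ∃ m : ℤ, sigma2 Y i j = (m : ℝ) := by
  obtain ⟨a, ha⟩ := h 0 0; obtain ⟨b, hb⟩ := h 0 1
  obtain ⟨c, hc⟩ := h 1 0; obtain ⟨d, hd⟩ := h 1 1
  intro i j
  fin_cases i <;> fin_cases j <;> simp [sigma2, ha, hb, hc, hd]
  · exact ⟨min b c - a, by push_cast [min_def]; split_ifs with h <;> simp_all [min_def]⟩
  · exact ⟨b - min b c + a, by push_cast [min_def]; split_ifs with h <;> simp_all [min_def]⟩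
  · exact ⟨c - min b c + a, by push_cast [min_def]; split_ifs with h <;> simp_all [min_def]⟩
  · exact ⟨d - max b c, by push_cast [max_def]; split_ifs with h <;> simp_all [max_def]⟩

/-- `rho2` is a bijection from the 2×2 nonnegative matrices onto the 2×2 nonnegative
matrices weakly increasing along rows and columns, restricting to a bijection on
integer matrices. -/
theorem rho2_bijOn :
    Set.BijOn rho2 {X : Matrix (Fin 2) (Fin 2) ℝ | ∀ i j, 0 ≤ X i j}
      {Y : Matrix (Fin 2) (Fin 2) ℝ | 0 ≤ Y 0 0 ∧ Y 0 0 ≤ Y 0 1 ∧ Y 0 0 ≤ Y 1 0 ∧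
        Y 0 1 ≤ Y 1 1 ∧ Y 1 0 ≤ Y 1 1} ∧
    Set.BijOn rho2
      {X : Matrix (Fin 2) (Fin 2) ℝ | (∀ i j, 0 ≤ X i j) ∧ ∀ i j, ∃ m : ℤ, X i j = (m : ℝ)}
      {Y : Matrix (Fin 2) (Fin 2) ℝ | (0 ≤ Y 0 0 ∧ Y 0 0 ≤ Y 0 1 ∧ Y 0 0 ≤ Y 1 0 ∧
        Y 0 1 ≤ Y 1 1 ∧ Y 1 0 ≤ Y 1 1) ∧ ∀ i j, ∃ m : ℤ, Y i j = (m : ℝ)} := by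
  constructor
  · exact Set.InvOn.bijOn ⟨fun X hX => sigma_rho X hX, fun Y hY => rho_sigma Y hY⟩
      (fun X hX => rho_maps X hX) (fun Y hY => sigma_maps Y hY)
  · exact Set.InvOn.bijOn
      ⟨fun X hX => sigma_rho X hX.1, fun Y hY => rho_sigma Y hY.1⟩
      (fun X hX => ⟨rho_maps X hX.1, rho_int X hX.2⟩)
      (fun Y hY => ⟨sigma_maps Y hY.1, sigma_int Y hY.2⟩)
end

section
/- Assume ρ: X_n → Y_n is a bijection satisfying properties (1)–(4) of Pak's piecewise-linear RSK theorem. Then ρ restricts to a bijection from B_n^k onto M_n^k, and moreover to a bijection between B_n^k ∩ (1/t)Z^{n×n} and M_n^k ∩ (1/t)Z^{n×n} for every integer t ≥ 1. -/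
open scoped BigOperators

/-- The cone `X_n` of `n × n` nonnegative real matrices. -/
def setX (n : ℕ) : Set (Matrix (Fin n) (Fin n) ℝ) := {X | ∀ i j, 0 ≤ X i j}

/-- The cone `Y_n` of `n × n` nonnegative real matrices weakly increasing along rows
and columns. -/
def setY (n : ℕ) : Set (Matrix (Fin n) (Fin n) ℝ) :=
  {Y | (∀ i j, 0 ≤ Y i j) ∧
    ∀ i i' j j' : Fin n, i ≤ i' → j ≤ j' → Y i j ≤ Y i' j'}

/-- A real matrix with all entries in `(1/t)ℤ`. -/
def IsFracMatrix {n : ℕ} (t : ℕ) (X : Matrix (Fin n) (Fin n) ℝ) : Prop :=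
  ∀ i j, ∃ m : ℤ, X i j = (m : ℝ) / t


/-- Row sums. -/
def rowSum {n : ℕ} (X : Matrix (Fin n) (Fin n) ℝ) (i : Fin n) : ℝ := ∑ j, X i j

/-- Column sums. -/
def colSum {n : ℕ} (X : Matrix (Fin n) (Fin n) ℝ) (j : Fin n) : ℝ := ∑ i, X i j

/-- Properties (1)–(4) of Pak's piecewise-linear RSK theorem for a map
`ρ : X_n → Y_n`: bijectivity, homogeneity, restriction to a bijection on integer
matrices, the diagonal-sum property, and Schensted's path-maximum property. -/
def PakRSKProperties (n : ℕ) (hn : 0 < n)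
    (ρ : Matrix (Fin n) (Fin n) ℝ → Matrix (Fin n) (Fin n) ℝ) : Prop :=
  Set.BijOn ρ (setX n) (setY n) ∧
  (∀ X ∈ setX n, ∀ c : ℝ, 0 ≤ c → ρ (c • X) = c • ρ X) ∧
  Set.BijOn ρ (setX n ∩ {X | IsIntegerMatrix X}) (setY n ∩ {Y | IsIntegerMatrix Y}) ∧
  (∀ X ∈ setX n,
    (∀ l : Fin n, diagU (ρ X) l =
        ∑ i : Fin n, if (i : ℕ) < n - (l : ℕ) then rowSum X i else 0) ∧
    (∀ l : Fin n, diagL (ρ X) l =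
        ∑ j : Fin n, if (j : ℕ) < n - (l : ℕ) then colSum X j else 0)) ∧
  (∀ X ∈ setX n,
    IsGreatest {s : ℝ | ∃ p : ℕ → ℕ × ℕ, IsLatticePath n p ∧ s = pathSum X p}
      (ρ X ⟨n - 1, Nat.sub_lt hn one_pos⟩ ⟨n - 1, Nat.sub_lt hn one_pos⟩))


lemma step_sum {n : ℕ} (f : Fin n → ℝ) (m : ℕ) (hm : m < n) :
    ∑ i : Fin n, (if (i:ℕ) < m + 1 then f i else 0)
      = (∑ i : Fin n, if (i:ℕ) < m then f i else 0) + f ⟨m, hm⟩ := by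
  have h : ∀ i : Fin n, (if (i:ℕ) < m + 1 then f i else 0)
      = (if (i:ℕ) < m then f i else 0) + (if i = ⟨m, hm⟩ then f i else 0) := by
    intro i
    rcases lt_trichotomy (i : ℕ) m with h | h | h
    · have hne : i ≠ ⟨m, hm⟩ := by
        intro he; rw [he] at h; simp at h
      simp [h, Nat.lt_succ_of_lt h, hne]
    · have : i = ⟨m, hm⟩ := Fin.ext h
      simp [this, h]
    · have h1 : ¬ (i:ℕ) < m + 1 := by omega
      have h2 : ¬ (i:ℕ) < m := by omega
      have hne : i ≠ ⟨m, hm⟩ := by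
        intro he; rw [he] at h; simp at h
      simp [h1, h2, hne]
  rw [Finset.sum_congr rfl (fun i _ => h i), Finset.sum_add_distrib,
    Finset.sum_ite_eq' Finset.univ (⟨m, hm⟩ : Fin n) f]
  simp

lemma sum_lt_of_ones {n : ℕ} (f : Fin n → ℝ) (h1 : ∀ i, f i = 1) :
    ∀ m, m ≤ n → ∑ i : Fin n, (if (i:ℕ) < m then f i else 0) = (m : ℝ) := by
  intro m
  induction m with
  | zero => intro _; simp
  | succ m ih =>
    intro hm
    rw [step_sum f m (by omega), ih (by omega), h1]
    push_cast; ring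

lemma ones_of_sum_lt {n : ℕ} (f : Fin n → ℝ)
    (h : ∀ m, m ≤ n → ∑ i : Fin n, (if (i:ℕ) < m then f i else 0) = (m : ℝ)) :
    ∀ i : Fin n, f i = 1 := by
  intro i
  have hs := step_sum f (i : ℕ) i.isLt
  rw [h _ (by omega), h _ (by omega)] at hs
  have : f ⟨(i:ℕ), i.isLt⟩ = 1 := by push_cast at hs; linarith
  simpa using this

section Aux

variable {n k : ℕ}

lemma inM_mem_setY (hn : 0 < n) {Y : Matrix (Fin n) (Fin n) ℝ} (hY : InM n k Y) :
    Y ∈ setY n := by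
  refine ⟨fun i j => ?_, hY.1⟩
  exact le_trans (hY.2.1 hn).1
    (hY.1 ⟨0, hn⟩ i ⟨0, hn⟩ j (by simp [Fin.le_def]) (by simp [Fin.le_def]))

lemma key_iff (hn : 0 < n) (hk : 1 ≤ k)
    (ρ : Matrix (Fin n) (Fin n) ℝ → Matrix (Fin n) (Fin n) ℝ)
    (hρ : PakRSKProperties n hn ρ) {X : Matrix (Fin n) (Fin n) ℝ}
    (hX : X ∈ setX n) :
    InRestrictedBirkhoff n k X ↔ InM n k (ρ X) := by
  obtain ⟨hbij, hhom, hint, hdiag, hmax⟩ := hρ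
  have hY : ρ X ∈ setY n := hbij.mapsTo hX
  have hU := (hdiag X hX).1
  have hL := (hdiag X hX).2
  have hG := hmax X hX
  constructor
  · rintro ⟨hpos, hrow, hcol, hpath⟩
    refine ⟨hY.2, fun h => ⟨hY.1 _ _, ?_⟩, fun l => ?_, fun l => ?_⟩
    · obtain ⟨p, hp, hps⟩ := hG.1
      rw [hps]; exact hpath p hp
    · rw [hU l]
      exact sum_lt_of_ones (rowSum X) (fun i => hrow i) _ (Nat.sub_le n l)
    · rw [hL l]
      exact sum_lt_of_ones (colSum X) (fun j => hcol j) _ (Nat.sub_le n l)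
  · rintro ⟨hmono, hcorner, hdU, hdL⟩
    have hrs : ∀ m, m ≤ n →
        ∑ i : Fin n, (if (i:ℕ) < m then rowSum X i else 0) = (m : ℝ) := by
      intro m hm
      rcases Nat.eq_zero_or_pos m with rfl | hm0
      · simp
      · have hl : n - m < n := by omega
        have := hU ⟨n - m, hl⟩
        rw [hdU ⟨n - m, hl⟩] at this
        have hnm : n - (n - m) = m := by omega
        rw [show ((⟨n - m, hl⟩ : Fin n) : ℕ) = n - m from rfl, hnm] at this
        exact this.symm
    have hcs : ∀ m, m ≤ n →
        ∑ j : Fin n, (if (j:ℕ) < m then colSum X j else 0) = (m : ℝ) := by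
      intro m hm
      rcases Nat.eq_zero_or_pos m with rfl | hm0
      · simp
      · have hl : n - m < n := by omega
        have := hL ⟨n - m, hl⟩
        rw [hdL ⟨n - m, hl⟩] at this
        have hnm : n - (n - m) = m := by omega
        rw [show ((⟨n - m, hl⟩ : Fin n) : ℕ) = n - m from rfl, hnm] at this
        exact this.symm
    refine ⟨hX, ones_of_sum_lt _ hrs, ones_of_sum_lt _ hcs, fun p hp => ?_⟩
    exact le_trans (hG.2 ⟨p, hp, rfl⟩) (hcorner hn).2

lemma frac_iff_int {t : ℕ} (ht : 1 ≤ t) (X : Matrix (Fin n) (Fin n) ℝ) :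
    IsFracMatrix t X ↔ IsIntegerMatrix ((t : ℝ) • X) := by
  have ht0 : (t : ℝ) ≠ 0 := by positivity
  constructor
  · rintro h i j
    obtain ⟨m, hm⟩ := h i j
    exact ⟨m, by simp [Matrix.smul_apply, hm]; field_simp⟩
  · rintro h i j
    obtain ⟨m, hm⟩ := h i j
    refine ⟨m, ?_⟩
    simp [Matrix.smul_apply] at hm
    field_simp
    linarith [hm]

end Aux

/-- A map `ρ` with Pak's properties (1)–(4) restricts to a bijection from `B_n^k`
onto `M_n^k`, and to a bijection on `(1/t)ℤ`-points for every integer `t ≥ 1`. -/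
theorem rsk_restricts_B_to_M (n k : ℕ) (hn : 0 < n) (hk : 1 ≤ k) (hkn : k ≤ n)
    (ρ : Matrix (Fin n) (Fin n) ℝ → Matrix (Fin n) (Fin n) ℝ)
    (hρ : PakRSKProperties n hn ρ) :
    Set.BijOn ρ {X | InRestrictedBirkhoff n k X} {Y | InM n k Y} ∧
    ∀ t : ℕ, 1 ≤ t →
      Set.BijOn ρ ({X | InRestrictedBirkhoff n k X} ∩ {X | IsFracMatrix t X})
        ({Y | InM n k Y} ∩ {Y | IsFracMatrix t Y}) := by
  have hBsub : {X | InRestrictedBirkhoff n k X} ⊆ setX n := fun X hX => hX.1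
  have hkey : ∀ X ∈ setX n, (InRestrictedBirkhoff n k X ↔ InM n k (ρ X)) :=
    fun X hX => key_iff hn hk ρ hρ hX
  obtain ⟨hbij, hhom, hint, hdiag, hmax⟩ := hρ
  have hmain : Set.BijOn ρ {X | InRestrictedBirkhoff n k X} {Y | InM n k Y} := by
    refine ⟨fun X hX => (hkey X (hBsub hX)).1 hX, hbij.injOn.mono hBsub, fun Y hY => ?_⟩
    obtain ⟨X, hXs, hXY⟩ := hbij.surjOn (inM_mem_setY hn hY)
    exact ⟨X, (hkey X hXs).2 (hXY ▸ hY), hXY⟩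
  refine ⟨hmain, fun t ht => ?_⟩
  have ht0 : (0:ℝ) ≤ (t:ℝ) := Nat.cast_nonneg t
  -- X frac and X in setX implies ρ X frac
  have hfwd : ∀ X ∈ setX n, IsFracMatrix t X → IsFracMatrix t (ρ X) := by
    intro X hXs hXf
    have hXts : (t:ℝ) • X ∈ setX n := fun i j => by
      simpa [Matrix.smul_apply] using mul_nonneg ht0 (hXs i j)
    have h1 : (t:ℝ) • X ∈ setX n ∩ {X | IsIntegerMatrix X} :=
      ⟨hXts, (frac_iff_int ht X).1 hXf⟩
    have h2 := (hint.mapsTo h1).2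
    rw [hhom X hXs (t:ℝ) ht0] at h2
    exact (frac_iff_int ht (ρ X)).2 h2
  refine ⟨fun X hX => ⟨hmain.mapsTo hX.1, hfwd X (hBsub hX.1) hX.2⟩,
    hmain.injOn.mono Set.inter_subset_left, fun Y hY => ?_⟩
  obtain ⟨X, hXs, hXY⟩ := hbij.surjOn (inM_mem_setY hn hY.1)
  refine ⟨X, ⟨(hkey X hXs).2 (hXY ▸ hY.1), ?_⟩, hXY⟩
  -- show X is a frac matrix
  have hYs : Y ∈ setY n := inM_mem_setY hn hY.1
  have htYs : (t:ℝ) • Y ∈ setY n := by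
    refine ⟨fun i j => by simpa [Matrix.smul_apply] using mul_nonneg ht0 (hYs.1 i j),
      fun i i' j j' hi hj => ?_⟩
    simpa [Matrix.smul_apply] using mul_le_mul_of_nonneg_left (hYs.2 i i' j j' hi hj) ht0
  have htYi : (t:ℝ) • Y ∈ setY n ∩ {Y | IsIntegerMatrix Y} :=
    ⟨htYs, (frac_iff_int ht Y).1 hY.2⟩
  obtain ⟨X', hX's, hX'Y⟩ := hint.surjOn htYi
  have hXts : (t:ℝ) • X ∈ setX n := fun i j => by
    simpa [Matrix.smul_apply] using mul_nonneg ht0 (hXs i j)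
  have heq : (t:ℝ) • X = X' := by
    apply hbij.injOn hXts hX's.1
    rw [hhom X hXs (t:ℝ) ht0, hXY, hX'Y]
  exact (frac_iff_int ht X).2 (heq ▸ hX's.2)
end

section
/- Assume ρ: X_n → Y_n is a bijection with properties (1)–(4) of Pak's theorem. Then for every integer t ≥ 1, the number of lattice points in the t-th dilate of B_n^k equals the number of lattice points in the t-th dilate of M_n^k. -/
open scoped BigOperators

lemma sum_if_lt_one (n m : ℕ) (hm : m ≤ n) :
    (∑ i : Fin n, if (i : ℕ) < m then (1 : ℝ) else 0) = (m : ℝ) := by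
  rw [Fin.sum_univ_eq_sum_range (fun i => if i < m then (1:ℝ) else 0)]
  have h : (Finset.range n).filter (· < m) = Finset.range m := by
    ext x; simp; omega
  rw [← Finset.sum_filter, h]
  simp

lemma partial_sums_all_one {n : ℕ} (g : Fin n → ℝ)
    (h : ∀ l : Fin n, (∑ i : Fin n, if (i : ℕ) < n - (l : ℕ) then g i else 0)
        = ((n - (l : ℕ) : ℕ) : ℝ)) :
    ∀ i, g i = 1 := by
  set F : ℕ → ℝ := fun m => ∑ i : Fin n, if (i : ℕ) < m then g i else 0 with hF
  have hFm : ∀ m ≤ n, F m = m := by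
    intro m hm
    rcases Nat.eq_zero_or_pos m with h0 | h0
    · simp [hF, h0]
    · have hl : n - m < n := by omega
      have := h ⟨n - m, hl⟩
      simpa [hF, Nat.sub_sub_self hm] using this
  have hstep : ∀ i : Fin n, F ((i : ℕ) + 1) = F (i : ℕ) + g i := by
    intro i
    have : ∀ j : Fin n, (if (j : ℕ) < (i : ℕ) + 1 then g j else 0)
        = (if (j : ℕ) < (i : ℕ) then g j else 0) + (if j = i then g j else 0) := by
      intro j
      rcases eq_or_ne j i with rfl | hne
      · simp
      · have : (j : ℕ) ≠ (i : ℕ) := fun h => hne (Fin.ext h)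
        by_cases hj : (j : ℕ) < (i : ℕ)
        · simp [hj, hne, Nat.lt_succ_of_lt hj]
        · have : ¬ (j : ℕ) < (i : ℕ) + 1 := by omega
          simp [hj, hne, this]
    simp only [hF]
    rw [Finset.sum_congr rfl (fun j _ => this j), Finset.sum_add_distrib,
      Finset.sum_ite_eq' Finset.univ i]
    simp
  intro i
  have h1 : F ((i : ℕ) + 1) = ((i : ℕ) + 1 : ℕ) := hFm _ i.isLt
  have h2 : F (i : ℕ) = (i : ℕ) := hFm _ (le_of_lt i.isLt)
  have := hstep i
  rw [h1, h2] at this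
  push_cast at this
  linarith

/-- Under Pak's properties (1)–(4), the `t`-th dilates of `B_n^k` and `M_n^k` have
the same number of lattice points, for every integer `t ≥ 1`. -/
theorem dilate_latticePoint_counts_eq (n k : ℕ) (hn : 0 < n) (hk : 1 ≤ k) (hkn : k ≤ n)
    (ρ : Matrix (Fin n) (Fin n) ℝ → Matrix (Fin n) (Fin n) ℝ)
    (hρ : PakRSKProperties n hn ρ) :
    ∀ t : ℕ, 1 ≤ t →
      {Z : Matrix (Fin n) (Fin n) ℝ | IsIntegerMatrix Z ∧
          ∃ X, InRestrictedBirkhoff n k X ∧ Z = (t : ℝ) • X}.ncard =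
      {Z : Matrix (Fin n) (Fin n) ℝ | IsIntegerMatrix Z ∧
          ∃ Y, InM n k Y ∧ Z = (t : ℝ) • Y}.ncard := by
  intro t ht
  obtain ⟨hbij, hhom, hint, hdiag, hmax⟩ := hρ
  have hT : (0 : ℝ) < (t : ℝ) := by exact_mod_cast Nat.lt_of_lt_of_le Nat.zero_lt_one ht
  have hT0 : (t : ℝ) ≠ 0 := ne_of_gt hT
  set A := {Z : Matrix (Fin n) (Fin n) ℝ | IsIntegerMatrix Z ∧
      ∃ X, InRestrictedBirkhoff n k X ∧ Z = (t : ℝ) • X} with hA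
  set B := {Z : Matrix (Fin n) (Fin n) ℝ | IsIntegerMatrix Z ∧
      ∃ Y, InM n k Y ∧ Z = (t : ℝ) • Y} with hB
  have hAsub : A ⊆ setX n ∩ {X | IsIntegerMatrix X} := by
    rintro Z ⟨hZint, X, hX, rfl⟩
    refine ⟨fun i j => ?_, hZint⟩
    exact mul_nonneg (le_of_lt hT) (hX.1 i j)
  -- forward inclusion : ρ '' A ⊆ B
  have hfwd : ρ '' A ⊆ B := by
    rintro _ ⟨Z, hZ, rfl⟩
    obtain ⟨hZint, X, hX, rfl⟩ := hZ
    obtain ⟨hXnn, hXrow, hXcol, hXpath⟩ := hX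
    have hXX : X ∈ setX n := hXnn
    have hρZ : ρ ((t : ℝ) • X) = (t : ℝ) • ρ X := hhom X hXX _ (le_of_lt hT)
    have hmem : ρ ((t : ℝ) • X) ∈ setY n ∩ {Y | IsIntegerMatrix Y} :=
      hint.mapsTo (hAsub ⟨hZint, X, ⟨hXnn, hXrow, hXcol, hXpath⟩, rfl⟩)
    refine ⟨hmem.2, ρ X, ?_, hρZ⟩
    have hY : ρ X ∈ setY n := hbij.mapsTo hXX
    refine ⟨hY.2, fun h => ⟨hY.1 _ _, ?_⟩, ?_, ?_⟩
    · -- corner bound via Schensted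
      obtain ⟨⟨p, hp, hps⟩, _⟩ := hmax X hXX
      rw [hps]
      exact hXpath p hp
    · intro l
      have := (hdiag X hXX).1 l
      rw [this]
      have hle : n - (l : ℕ) ≤ n := Nat.sub_le _ _
      calc (∑ i : Fin n, if (i : ℕ) < n - (l : ℕ) then rowSum X i else 0)
          = ∑ i : Fin n, if (i : ℕ) < n - (l : ℕ) then (1:ℝ) else 0 := by
            refine Finset.sum_congr rfl fun i _ => ?_
            by_cases hi : (i : ℕ) < n - (l : ℕ) <;> simp [hi, rowSum, hXrow i]
        _ = _ := sum_if_lt_one n _ hle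
    · intro l
      have := (hdiag X hXX).2 l
      rw [this]
      have hle : n - (l : ℕ) ≤ n := Nat.sub_le _ _
      calc (∑ j : Fin n, if (j : ℕ) < n - (l : ℕ) then colSum X j else 0)
          = ∑ j : Fin n, if (j : ℕ) < n - (l : ℕ) then (1:ℝ) else 0 := by
            refine Finset.sum_congr rfl fun j _ => ?_
            by_cases hj : (j : ℕ) < n - (l : ℕ) <;> simp [hj, colSum, hXcol j]
        _ = _ := sum_if_lt_one n _ hle
  -- backward inclusion : B ⊆ ρ '' A
  have hbwd : B ⊆ ρ '' A := by
    rintro Z' ⟨hZ'int, Y, hY, rfl⟩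
    obtain ⟨hmono, hcorner, hdU, hdL⟩ := hY
    obtain ⟨h00, hnn⟩ := hcorner hn
    have hYnn : ∀ i j, 0 ≤ Y i j := by
      intro i j
      refine le_trans h00 (hmono _ _ _ _ ?_ ?_) <;> exact Fin.le_def.mpr (Nat.zero_le _)
    have hYsetY : Y ∈ setY n := ⟨hYnn, hmono⟩
    have hZ'Y : (t : ℝ) • Y ∈ setY n ∩ {Y | IsIntegerMatrix Y} := by
      refine ⟨⟨fun i j => mul_nonneg (le_of_lt hT) (hYnn i j),
        fun i i' j j' hi hj => mul_le_mul_of_nonneg_left (hmono i i' j j' hi hj) (le_of_lt hT)⟩,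
        hZ'int⟩
    obtain ⟨Z, hZmem, hρZ⟩ := hint.surjOn hZ'Y
    obtain ⟨hZX, hZint⟩ := hZmem
    set X : Matrix (Fin n) (Fin n) ℝ := ((t : ℝ))⁻¹ • Z with hXdef
    have htX : (t : ℝ) • X = Z := smul_inv_smul₀ hT0 Z
    have hXnn : ∀ i j, 0 ≤ X i j := fun i j =>
      mul_nonneg (inv_nonneg.mpr (le_of_lt hT)) (hZX i j)
    have hρX : ρ X = Y := by
      have h1 : ρ ((t : ℝ) • X) = (t : ℝ) • ρ X := hhom X hXnn _ (le_of_lt hT)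
      rw [htX, hρZ] at h1
      have := h1.symm
      exact smul_right_injective (Matrix (Fin n) (Fin n) ℝ) hT0 this
    have hrow : ∀ i, rowSum X i = 1 := by
      apply partial_sums_all_one
      intro l
      have := (hdiag X hXnn).1 l
      rw [hρX] at this
      rw [← this, hdU l]
    have hcol : ∀ j, colSum X j = 1 := by
      apply partial_sums_all_one
      intro l
      have := (hdiag X hXnn).2 l
      rw [hρX] at this
      rw [← this, hdL l]
    refine ⟨Z, ⟨hZint, X, ⟨hXnn, hrow, hcol, ?_⟩, htX.symm⟩, hρZ⟩
    intro p hp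
    obtain ⟨_, hub⟩ := hmax X hXnn
    have := hub ⟨p, hp, rfl⟩
    rw [hρX] at this
    exact le_trans this hnn
  have himg : ρ '' A = B := Set.Subset.antisymm hfwd hbwd
  have hinj : Set.InjOn ρ A := hint.injOn.mono hAsub
  rw [← himg, Set.ncard_image_of_injOn hinj]
end

section
/- For n ≥ 2, the (2n+1)×(2n+1) matrix X with x_{i,i} = 2n/(2n+1) and x_{i, i+n mod 2n+1} = 1/(2n+1) (indices modulo 2n+1) and all other entries 0 is a vertex of the restricted Birkhoff polytope B_{2n+1}^{2n}; consequently, the denominators of vertices of restricted Birkhoff polytopes are unbounded. -/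
open scoped BigOperators

/-!
Along a lattice path the cells at levels `2k` and `2k + 1` (`k < 2n`) are adjacent, and a diagonal
cell is never adjacent to a cell of the shifted diagonal once `n ≥ 2`; so each such pair carries at
most `2n/(2n+1)` of `X`, as does the last cell, and every path sum is at most `2n`.

Conversely, if `X = (Y + Z)/2` then `Y` and `Z` vanish off the support of `X`. For a doubly
stochastic `Y` with that support, row `i` and column `i + n` give `Y (i+n) (i+n) = Y i i`, and since
`n + n = -1` in `Fin (2n+1)` the diagonal of `Y` is a constant `δ`, which determines `Y`. The
staircase path covers the diagonal, so `(2n+1) δ ≤ 2n`; as `X` has diagonal value exactly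
`2n/(2n+1)`, both `Y` and `Z` have that diagonal value and hence coincide.
-/

open Finset Fin.NatCast Fin.CommRing

theorem Finset.sum_range_two_mul_add_one {M : Type*} [AddCommMonoid M] (f : ℕ → M) (m : ℕ) :
    ∑ i ∈ range (2 * m + 1), f i = ∑ k ∈ range m, (f (2 * k) + f (2 * k + 1)) + f (2 * m) := by
  induction m with
  | zero => simp
  | succ m ih =>
    rw [show 2 * (m + 1) + 1 = 2 * m + 1 + 1 + 1 by ring, sum_range_succ, sum_range_succ, ih,
      sum_range_succ, show 2 * (m + 1) = 2 * m + 1 + 1 by ring]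
    abel

theorem Fin.apply_eq_apply_zero_of_periodic_one {m : ℕ} {α : Type*} {f : Fin (m + 1) → α}
    (h : Function.Periodic f 1) (i : Fin (m + 1)) : f i = f 0 := by
  induction i using Fin.induction with
  | zero => rfl
  | succ i ih => rw [← Fin.coeSucc_eq_succ, h, ih]

section LatticePath

variable {N : ℕ} {p : ℕ → ℕ × ℕ}

theorem IsLatticePath.sum_le (hp : IsLatticePath N p) {f : ℕ × ℕ → ℝ} {a : ℝ}
    (hf : ∀ q, f q ≤ a)
    (hadj : ∀ q q' : ℕ × ℕ, (q' = (q.1 + 1, q.2) ∨ q' = (q.1, q.2 + 1)) → f q + f q' ≤ a) :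
    ∑ i ∈ range (2 * N - 1), f (p i) ≤ N * a := by
  rcases N with _ | m
  · simp
  have hstep : ∀ k ∈ range m, f (p (2 * k)) + f (p (2 * k + 1)) ≤ a := fun k hk =>
    hadj _ _ (hp.2.2 (2 * k) (by rw [mem_range] at hk; omega))
  calc ∑ i ∈ range (2 * (m + 1) - 1), f (p i)
      = ∑ k ∈ range m, (f (p (2 * k)) + f (p (2 * k + 1))) + f (p (2 * m)) := by
        rw [show 2 * (m + 1) - 1 = 2 * m + 1 by omega, sum_range_two_mul_add_one]
    _ ≤ ∑ _k ∈ range m, a + a := add_le_add (sum_le_sum hstep) (hf _)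
    _ = (m + 1 : ℕ) * a := by rw [sum_const, card_range, nsmul_eq_mul]; push_cast; ring

def stairPath (i : ℕ) : ℕ × ℕ := ((i + 1) / 2, i / 2)

theorem isLatticePath_stairPath (N : ℕ) : IsLatticePath N stairPath := by
  refine ⟨rfl, ?_, fun i _ => ?_⟩
  · simp only [stairPath, Prod.mk.injEq]; omega
  · rcases Nat.even_or_odd i with ⟨k, rfl⟩ | ⟨k, rfl⟩
    · left; simp only [stairPath, Prod.mk.injEq]; omega
    · right; simp only [stairPath, Prod.mk.injEq]; omega

end LatticePath

theorem ent_nonneg_s15 {N : ℕ} {Y : Matrix (Fin N) (Fin N) ℝ} (hY : ∀ i j, 0 ≤ Y i j) (q : ℕ × ℕ) :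
    0 ≤ ent Y q := by
  unfold ent; split_ifs <;> simp [hY]

theorem InRestrictedBirkhoff.trace_le {N k : ℕ} {Y : Matrix (Fin N) (Fin N) ℝ}
    (hY : InRestrictedBirkhoff N k Y) : Y.trace ≤ k := by
  rcases N with _ | m
  · simp [Matrix.trace]
  have hdiag : ∀ i : Fin (m + 1), ent Y (stairPath (2 * i)) = Y i i := fun i => by
    simp [stairPath, ent, show (2 * (i : ℕ) + 1) / 2 = i by omega, Fin.is_le]
  calc Y.trace = ∑ k ∈ range (m + 1), ent Y (stairPath (2 * k)) := by
        simp only [Matrix.trace, Matrix.diag_apply, ← hdiag]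
        exact Fin.sum_univ_eq_sum_range (fun k => ent Y (stairPath (2 * k))) _
    _ ≤ ∑ k ∈ range m, (ent Y (stairPath (2 * k)) + ent Y (stairPath (2 * k + 1)))
          + ent Y (stairPath (2 * m)) := by
        rw [sum_range_succ]
        gcongr with k
        exact le_add_of_nonneg_right (ent_nonneg_s15 hY.1 _)
    _ = pathSum Y stairPath := by
        rw [pathSum, show 2 * (m + 1) - 1 = 2 * m + 1 by omega, sum_range_two_mul_add_one]
    _ ≤ k := hY.2.2.2 stairPath (isLatticePath_stairPath _)

section DoublyStochastic

variable {ι : Type*} {σ : Equiv.Perm ι}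

section

variable [Fintype ι] {Y : Matrix ι ι ℝ}

theorem add_apply_perm_eq_one_of_support (hσ : ∀ i, σ i ≠ i) (hrow : ∀ i, ∑ j, Y i j = 1)
    (hsupp : ∀ i j, j ≠ i → j ≠ σ i → Y i j = 0) (i : ι) : Y i i + Y i (σ i) = 1 := by
  rw [← hrow i, Fintype.sum_eq_add i (σ i) (hσ i).symm fun j hj => hsupp i j hj.1 hj.2]

theorem diag_apply_perm_of_support (hσ : ∀ i, σ i ≠ i) (hrow : ∀ i, ∑ j, Y i j = 1)
    (hcol : ∀ j, ∑ i, Y i j = 1) (hsupp : ∀ i j, j ≠ i → j ≠ σ i → Y i j = 0) (i : ι) :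
    Y (σ i) (σ i) = Y i i := by
  have hcol_σ : Y (σ i) (σ i) + Y i (σ i) = 1 := by
    rw [← hcol (σ i), Fintype.sum_eq_add (σ i) i (hσ i) fun k hk =>
      hsupp k (σ i) (Ne.symm hk.1) (σ.injective.ne hk.2).symm]
  linarith [add_apply_perm_eq_one_of_support hσ hrow hsupp i]

end

variable [DecidableEq ι]

def diagShift (σ : Equiv.Perm ι) (a b : ℝ) : Matrix ι ι ℝ :=
  Matrix.of fun i j => if j = i then a else if j = σ i then b else 0

theorem diagShift_nonneg {a b : ℝ} (ha : 0 ≤ a) (hb : 0 ≤ b) (i j : ι) :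
    0 ≤ diagShift σ a b i j := by
  simp only [diagShift, Matrix.of_apply]
  split_ifs <;> first | exact ha | exact hb | exact le_rfl

variable [Fintype ι]

theorem sum_diagShift_row (hσ : ∀ i, σ i ≠ i) (a b : ℝ) (i : ι) :
    ∑ j, diagShift σ a b i j = a + b := by
  rw [Fintype.sum_eq_add i (σ i) (hσ i).symm fun j hj => by simp [diagShift, hj.1, hj.2]]
  simp [diagShift, hσ i]

theorem sum_diagShift_col (hσ : ∀ i, σ i ≠ i) (a b : ℝ) (j : ι) :
    ∑ i, diagShift σ a b i j = a + b := by
  have hne : j ≠ σ.symm j := fun h => hσ j (σ.eq_symm_apply.mp h)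
  rw [Fintype.sum_eq_add j (σ.symm j) hne fun i hi => ?_]
  · simp [diagShift, hne]
  · simp only [diagShift, Matrix.of_apply, if_neg (Ne.symm hi.1), ite_eq_right_iff]
    exact fun h => (hi.2 (σ.eq_symm_apply.mpr h.symm)).elim

theorem eq_diagShift_of_support {Y : Matrix ι ι ℝ} (hσ : ∀ i, σ i ≠ i)
    (hrow : ∀ i, ∑ j, Y i j = 1)
    (hsupp : ∀ i j, j ≠ i → j ≠ σ i → Y i j = 0) {δ : ℝ} (hdiag : ∀ i, Y i i = δ) :
    Y = diagShift σ δ (1 - δ) := by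
  ext i j
  simp only [diagShift, Matrix.of_apply]
  split_ifs with h₁ h₂
  · exact h₁ ▸ hdiag i
  · linarith [h₂ ▸ add_apply_perm_eq_one_of_support hσ hrow hsupp i, hdiag i]
  · exact hsupp i j h₁ h₂

end DoublyStochastic

theorem Fin.natCast_add_self_eq_neg_one (n : ℕ) : ((n : Fin (2 * n + 1)) + n) = -1 := by
  rw [eq_neg_iff_add_eq_zero]
  have h := Fin.natCast_self (2 * n + 1)
  push_cast at h
  linear_combination h

theorem Fin.add_natCast_ne_self {n : ℕ} (hn : n ≠ 0) (i : Fin (2 * n + 1)) : i + n ≠ i := by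
  rw [Ne, add_eq_left, Fin.natCast_eq_zero]
  exact Nat.not_dvd_of_pos_of_lt (Nat.pos_of_ne_zero hn) (by omega)

section VertexMatrix

variable {n : ℕ}

noncomputable def vertexMatrix (n : ℕ) : Matrix (Fin (2 * n + 1)) (Fin (2 * n + 1)) ℝ :=
  Matrix.of fun i j : Fin (2 * n + 1) =>
    if (j : ℕ) = (i : ℕ) then (2 * n : ℝ) / (2 * n + 1)
    else if (j : ℕ) = ((i : ℕ) + n) % (2 * n + 1) then 1 / (2 * n + 1) else 0

theorem vertexMatrix_eq_diagShift (n : ℕ) :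
    vertexMatrix n =
      diagShift (Equiv.addRight (n : Fin (2 * n + 1))) ((2 * n : ℝ) / (2 * n + 1))
        (1 / (2 * n + 1)) := by
  ext i j
  simp only [vertexMatrix, diagShift, Matrix.of_apply, Equiv.coe_addRight, ← Fin.val_inj,
    Fin.val_add, Fin.val_natCast, Nat.mod_eq_of_lt (show n < 2 * n + 1 by omega)]

theorem ent_vertexMatrix_le (n r c : ℕ) :
    ent (vertexMatrix n) (r, c) ≤
      if c = r then (2 * n : ℝ) / (2 * n + 1) else 1 / (2 * n + 1) := by
  simp only [ent, vertexMatrix, Matrix.of_apply]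
  split_ifs <;> first | exact le_rfl | positivity

theorem ent_vertexMatrix_eq_zero (hn : 2 ≤ n) {r c : ℕ} (h : c = r + 1 ∨ r = c + 1) :
    ent (vertexMatrix n) (r, c) = 0 := by
  simp only [ent, vertexMatrix, Matrix.of_apply]
  split_ifs with hrc h₁ h₂
  · omega
  · rw [Nat.add_mod_eq_ite, Nat.mod_eq_of_lt hrc.1, Nat.mod_eq_of_lt (by omega)] at h₂
    split_ifs at h₂ <;> omega
  all_goals rfl

theorem ent_vertexMatrix_add_le (hn : 2 ≤ n) (q q' : ℕ × ℕ)
    (hq' : q' = (q.1 + 1, q.2) ∨ q' = (q.1, q.2 + 1)) :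
    ent (vertexMatrix n) q + ent (vertexMatrix n) q' ≤ (2 * n : ℝ) / (2 * n + 1) := by
  obtain ⟨r, c⟩ := q
  obtain ⟨r', c'⟩ := q'
  simp only [Prod.mk.injEq] at hq'
  have h := ent_vertexMatrix_le n r c
  have h' := ent_vertexMatrix_le n r' c'
  by_cases hd : c = r
  · rw [ent_vertexMatrix_eq_zero hn (r := r') (c := c') (by omega)]
    rw [if_pos hd] at h
    linarith
  by_cases hd' : c' = r'
  · rw [ent_vertexMatrix_eq_zero hn (r := r) (c := c) (by omega)]
    rw [if_pos hd'] at h'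
    linarith
  have hB : (1 : ℝ) / (2 * n + 1) + 1 / (2 * n + 1) ≤ 2 * n / (2 * n + 1) := by
    rw [← add_div]
    gcongr
    linarith [show (2 : ℝ) ≤ n by exact_mod_cast hn]
  rw [if_neg hd] at h
  rw [if_neg hd'] at h'
  linarith

theorem vertexMatrix_mem (hn : 2 ≤ n) :
    InRestrictedBirkhoff (2 * n + 1) (2 * n) (vertexMatrix n) := by
  have hσ : ∀ i, Equiv.addRight (n : Fin (2 * n + 1)) i ≠ i := Fin.add_natCast_ne_self (by omega)
  have hsum : (2 * n : ℝ) / (2 * n + 1) + 1 / (2 * n + 1) = 1 := by field_simp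
  have hnonneg : ∀ i j, 0 ≤ vertexMatrix n i j := by
    rw [vertexMatrix_eq_diagShift]
    exact diagShift_nonneg (by positivity) (by positivity)
  refine ⟨hnonneg, fun i => ?_, fun j => ?_, fun p hp => ?_⟩
  · rw [vertexMatrix_eq_diagShift, sum_diagShift_row hσ, hsum]
  · rw [vertexMatrix_eq_diagShift, sum_diagShift_col hσ, hsum]
  calc pathSum (vertexMatrix n) p ≤ ((2 * n + 1 : ℕ) : ℝ) * ((2 * n : ℝ) / (2 * n + 1)) :=
        hp.sum_le (fun q => (le_add_of_nonneg_right (ent_nonneg_s15 hnonneg _)).trans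
          (ent_vertexMatrix_add_le hn q _ (.inl rfl))) (ent_vertexMatrix_add_le hn)
    _ = (2 * n : ℕ) := by push_cast; field_simp

end VertexMatrix

theorem InRestrictedBirkhoff.exists_eq_diagShift {n : ℕ} (hn : n ≠ 0)
    {Y : Matrix (Fin (2 * n + 1)) (Fin (2 * n + 1)) ℝ}
    (hY : InRestrictedBirkhoff (2 * n + 1) (2 * n) Y)
    (hsupp : ∀ i j, j ≠ i → j ≠ Equiv.addRight (n : Fin (2 * n + 1)) i → Y i j = 0) :
    ∃ δ ≤ (2 * n : ℝ) / (2 * n + 1),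
      Y = diagShift (Equiv.addRight (n : Fin (2 * n + 1))) δ (1 - δ) := by
  have hσ : ∀ i, Equiv.addRight (n : Fin (2 * n + 1)) i ≠ i := Fin.add_natCast_ne_self hn
  have hper : Function.Periodic (fun i => Y i i) (n : Fin (2 * n + 1)) :=
    diag_apply_perm_of_support hσ hY.2.1 hY.2.2.1 hsupp
  have hdiag : ∀ i, Y i i = Y 0 0 := Fin.apply_eq_apply_zero_of_periodic_one <| by
    simpa [Fin.natCast_add_self_eq_neg_one] using (hper.add_period hper).neg
  refine ⟨Y 0 0, ?_, eq_diagShift_of_support hσ hY.2.1 hsupp hdiag⟩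
  have htrace : Y.trace = (2 * n + 1 : ℕ) * Y 0 0 := by
    simp [Matrix.trace, hdiag]
  rw [le_div_iff₀ (by positivity), mul_comm]
  exact_mod_cast htrace ▸ hY.trace_le

/-- For `n ≥ 2`, the `(2n+1) × (2n+1)` matrix with `2n/(2n+1)` on the main diagonal
and `1/(2n+1)` on the diagonal shifted by `n` (mod `2n+1`) is a vertex of
`B_{2n+1}^{2n}`. -/
theorem big_denominator_vertex (n : ℕ) (hn : 2 ≤ n) :
    InRestrictedBirkhoff (2 * n + 1) (2 * n)
      (Matrix.of fun i j : Fin (2 * n + 1) =>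
        if (j : ℕ) = (i : ℕ) then (2 * n : ℝ) / (2 * n + 1)
        else if (j : ℕ) = ((i : ℕ) + n) % (2 * n + 1) then 1 / (2 * n + 1) else 0) ∧
    ∀ Y Z : Matrix (Fin (2 * n + 1)) (Fin (2 * n + 1)) ℝ,
      InRestrictedBirkhoff (2 * n + 1) (2 * n) Y →
      InRestrictedBirkhoff (2 * n + 1) (2 * n) Z →
      (Matrix.of fun i j : Fin (2 * n + 1) =>
        if (j : ℕ) = (i : ℕ) then (2 * n : ℝ) / (2 * n + 1)
        else if (j : ℕ) = ((i : ℕ) + n) % (2 * n + 1) then 1 / (2 * n + 1) else 0)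
        = (1 / 2 : ℝ) • (Y + Z) → Y = Z := by
  refine ⟨vertexMatrix_mem hn, fun Y Z hY hZ hXYZ => ?_⟩
  rw [← vertexMatrix, vertexMatrix_eq_diagShift] at hXYZ
  have hX : ∀ i j : Fin (2 * n + 1), j ≠ i → j ≠ i + n → Y i j + Z i j = 0 :=
    fun i j h₁ h₂ => by simpa [diagShift, h₁, h₂] using (congrFun (congrFun hXYZ i) j).symm
  obtain ⟨δY, hδY, rfl⟩ := hY.exists_eq_diagShift (by omega) fun i j h₁ h₂ => by
    linarith [hY.1 i j, hZ.1 i j, hX i j h₁ h₂]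
  obtain ⟨δZ, hδZ, rfl⟩ := hZ.exists_eq_diagShift (by omega) fun i j h₁ h₂ => by
    linarith [hY.1 i j, hZ.1 i j, hX i j h₁ h₂]
  have h₀₀ := congrFun (congrFun hXYZ 0) 0
  simp only [diagShift, Matrix.of_apply, Matrix.smul_apply, Matrix.add_apply, if_true,
    smul_eq_mul] at h₀₀
  rw [show δY = δZ by linarith]
end

section
/- Stanley's transfer map φ: O(P) → C(P), defined by φ(f)(p) = f(p) if p is minimal and φ(f)(p) = f(p) − max{f(q) : q < p} otherwise, is a bijection from the order polytope to the chain polytope of a finite poset P, with inverse φ⁻¹(f)(p) = max over chains p_1 < ... < p_k = p of f(p_1) + ... + f(p_k); moreover φ restricts to a bijection between O(P) ∩ (1/t)Z^P and C(P) ∩ (1/t)Z^P for every integer t ≥ 1. -/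
open scoped BigOperators

variable {P : Type*} [PartialOrder P] [Fintype P]

/-- The order polytope `O(P)`: monotone functions `P → ℝ` with values in `[0,1]`. -/
def orderPolytope (P : Type*) [PartialOrder P] : Set (P → ℝ) :=
  {f | (∀ p, 0 ≤ f p ∧ f p ≤ 1) ∧ ∀ p q, p ≤ q → f p ≤ f q}

/-- The chain polytope `C(P)`: nonnegative functions whose sums along strict chains
are at most `1`. -/
def chainPolytope (P : Type*) [PartialOrder P] : Set (P → ℝ) :=
  {f | (∀ p, 0 ≤ f p) ∧
    ∀ l : List P, l.Chain' (· < ·) → (l.map f).sum ≤ 1}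

open scoped Classical in
/-- Stanley's transfer map `φ : O(P) → C(P)`:
`φ(f)(p) = f(p)` for `p` minimal, and `f(p) − max{f(q) : q < p}` otherwise. -/
noncomputable def transferMap (P : Type*) [PartialOrder P] [Fintype P]
    (f : P → ℝ) (p : P) : ℝ :=
  if h : (Finset.univ.filter (fun q => q < p)).Nonempty then
    f p - (Finset.univ.filter (fun q => q < p)).sup' h f
  else f p

/-- The inverse transfer map `φ⁻¹ : C(P) → O(P)`:
`φ⁻¹(f)(p) = max { f(p₁) + ⋯ + f(p_k) : chains p₁ < ⋯ < p_k = p }`. -/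
noncomputable def transferMapInv (P : Type*) [PartialOrder P]
    (f : P → ℝ) (p : P) : ℝ :=
  sSup {s : ℝ | ∃ l : List P, l.Chain' (· < ·) ∧ l.getLast? = some p ∧
    s = (l.map f).sum}

/-- A function with all values in `(1/t)ℤ`. -/
def IsFracFn (P : Type*) (t : ℕ) (f : P → ℝ) : Prop :=
  ∀ p, ∃ m : ℤ, f p = (m : ℝ) / t

/-!
Write `supBelow f p` for `max {f q : q < p}`, taken to be `0` when `p` is minimal, so that
`φ(f)(p) = f(p) - supBelow f p`. Splitting off the last element of a chain shows that
`ψ := φ⁻¹` satisfies `ψ(g)(p) = g(p) + supBelow ψ(g) p`, which is the triangular system inverse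
to `φ`; injectivity of `φ` follows from the same triangularity by well-founded induction.
Since `φ(f)(p) ≤ f(p) - f(q)` for `q < p`, the sum of `φ(f)` along a chain above `q` telescopes
to at most `1 - f(q)`, which puts `φ(f)` in `C(P)`. Both recursions only add or subtract values of the functions involved, so they
preserve `(1/t)ℤ`-valuedness.
-/

theorem isFracFn_iff_mem_zmultiples {β : Type*} {t : ℕ} {f : β → ℝ} :
    IsFracFn β t f ↔ ∀ p, f p ∈ AddSubgroup.zmultiples ((t : ℝ)⁻¹) := by
  simp only [IsFracFn, AddSubgroup.mem_zmultiples_iff, zsmul_eq_mul, div_eq_mul_inv, eq_comm]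

universe u

variable {α : Type u} [PartialOrder α]

section ChainSums

def chainSums (g : α → ℝ) (p : α) : Set ℝ :=
  {s : ℝ | ∃ l : List α, l.IsChain (· < ·) ∧ l.getLast? = some p ∧ s = (l.map g).sum}

theorem self_mem_chainSums (g : α → ℝ) (p : α) : g p ∈ chainSums g p :=
  ⟨[p], List.isChain_singleton p, rfl, by simp⟩

theorem mem_chainSums_iff {g : α → ℝ} {p : α} {s : ℝ} :
    s ∈ chainSums g p ↔ s = g p ∨ ∃ q < p, s - g p ∈ chainSums g q := by
  simp only [chainSums, List.getLast?_eq_some_iff, Set.mem_ofPred_eq]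
  constructor
  · rintro ⟨_, hl, ⟨l, rfl⟩, rfl⟩
    rw [List.isChain_append] at hl
    rcases hq : l.getLast? with _ | q
    · simp_all
    · exact Or.inr ⟨q, hl.2.2 q hq p rfl, l, hl.1, List.getLast?_eq_some_iff.1 hq, by simp⟩
  · rintro (rfl | ⟨q, hqp, l, hl, ⟨l', rfl⟩, hs⟩)
    · exact ⟨[p], List.isChain_singleton p, ⟨[], rfl⟩, by simp⟩
    · refine ⟨l' ++ [q] ++ [p], hl.append (List.isChain_singleton p) ?_, ⟨_, rfl⟩, ?_⟩
      · simpa using hqp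
      · simp only [List.map_append, List.map_cons, List.map_nil, List.sum_append,
          List.sum_cons, List.sum_nil] at hs ⊢
        linarith

variable {g : α → ℝ} (hg : g ∈ chainPolytope α)
include hg

theorem bddAbove_chainSums (p : α) : BddAbove (chainSums g p) := by
  refine ⟨1, ?_⟩
  rintro s ⟨l, hl, -, rfl⟩
  exact hg.2 l hl

theorem self_le_transferMapInv (p : α) : g p ≤ transferMapInv α g p :=
  le_csSup (bddAbove_chainSums hg p) (self_mem_chainSums g p)

theorem transferMapInv_le_one (p : α) : transferMapInv α g p ≤ 1 := by
  refine csSup_le ⟨_, self_mem_chainSums g p⟩ ?_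
  rintro s ⟨l, hl, -, rfl⟩
  exact hg.2 l hl

theorem transferMapInv_nonneg (p : α) : 0 ≤ transferMapInv α g p :=
  (hg.1 p).trans (self_le_transferMapInv hg p)

end ChainSums

section SupBelow

variable [Fintype α]

open scoped Classical in
noncomputable def supBelow (f : α → ℝ) (p : α) : ℝ :=
  if h : (Finset.univ.filter (fun q => q < p)).Nonempty then
    (Finset.univ.filter (fun q => q < p)).sup' h f
  else 0

variable {f f' : α → ℝ} {p q : α}

theorem transferMap_eq_sub_supBelow (f : α → ℝ) (p : α) :
    transferMap α f p = f p - supBelow f p := by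
  unfold transferMap supBelow
  split_ifs <;> simp

theorem le_supBelow (f : α → ℝ) (hqp : q < p) : f q ≤ supBelow f p := by
  unfold supBelow
  split_ifs with hne
  · exact Finset.le_sup' f (by simpa using hqp)
  · exact absurd ⟨q, by simpa using hqp⟩ hne

theorem supBelow_le {c : ℝ} (hc : 0 ≤ c) (h : ∀ q < p, f q ≤ c) : supBelow f p ≤ c := by
  unfold supBelow
  split_ifs with hne
  · exact Finset.sup'_le hne f fun q hq => h q (by simpa using hq)
  · exact hc

theorem supBelow_nonneg (hf : ∀ q, 0 ≤ f q) (p : α) : 0 ≤ supBelow f p := by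
  unfold supBelow
  split_ifs with hne
  · obtain ⟨q, hq⟩ := hne
    exact (hf q).trans (Finset.le_sup' f hq)
  · exact le_rfl

theorem supBelow_congr (h : ∀ q < p, f q = f' q) : supBelow f p = supBelow f' p := by
  unfold supBelow
  split_ifs with hne
  · exact Finset.sup'_congr hne rfl fun q hq => h q (by simpa using hq)
  · rfl

theorem supBelow_mem {S : AddSubgroup ℝ} (h : ∀ q < p, f q ∈ S) : supBelow f p ∈ S := by
  unfold supBelow
  split_ifs with hne
  · obtain ⟨q, hq, hmax⟩ := Finset.exists_mem_eq_sup' hne f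
    exact hmax ▸ h q (by simpa using hq)
  · exact S.zero_mem

end SupBelow

variable [Fintype α] {f g : α → ℝ} {p q : α}

theorem transferMap_injective : Function.Injective (transferMap α) := by
  intro f f' heq
  funext p
  induction p using WellFoundedLT.induction with
  | ind p ih =>
    have hp := congrFun heq p
    rw [transferMap_eq_sub_supBelow, transferMap_eq_sub_supBelow, supBelow_congr ih] at hp
    linarith

theorem transferMap_le_sub (hqp : q < p) : transferMap α f p ≤ f p - f q := by
  rw [transferMap_eq_sub_supBelow]
  linarith [le_supBelow f hqp]

theorem sum_transferMap_le_one_sub (hf : f ∈ orderPolytope α) (q : α) (l : List α)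
    (hl : (q :: l).IsChain (· < ·)) : (l.map (transferMap α f)).sum ≤ 1 - f q := by
  induction l generalizing q with
  | nil => simpa using (hf.1 q).2
  | cons a l ih =>
    rw [List.isChain_cons_cons] at hl
    rw [List.map_cons, List.sum_cons]
    linarith [transferMap_le_sub (f := f) hl.1, ih a hl.2]

theorem transferMap_mem_chainPolytope (hf : f ∈ orderPolytope α) :
    transferMap α f ∈ chainPolytope α := by
  refine ⟨fun p => ?_, fun l hl => ?_⟩
  · rw [transferMap_eq_sub_supBelow, sub_nonneg]
    exact supBelow_le (hf.1 p).1 fun q hqp => hf.2 q p hqp.le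
  · rcases l with _ | ⟨a, l⟩
    · simp
    · have hφa : transferMap α f a ≤ f a := by
        rw [transferMap_eq_sub_supBelow]
        linarith [supBelow_nonneg (fun q => (hf.1 q).1) a]
      rw [List.map_cons, List.sum_cons]
      linarith [sum_transferMap_le_one_sub hf a l hl]

theorem transferMapInv_eq_add_supBelow (hg : g ∈ chainPolytope α) (p : α) :
    transferMapInv α g p = g p + supBelow (transferMapInv α g) p := by
  apply le_antisymm
  · refine csSup_le ⟨_, self_mem_chainSums g p⟩ fun s hs => ?_
    rcases mem_chainSums_iff.1 hs with rfl | ⟨q, hqp, hq⟩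
    · linarith [supBelow_nonneg (transferMapInv_nonneg hg) p]
    · have hsq : s - g p ≤ transferMapInv α g q := le_csSup (bddAbove_chainSums hg q) hq
      linarith [le_supBelow (transferMapInv α g) hqp]
  · suffices supBelow (transferMapInv α g) p ≤ transferMapInv α g p - g p by linarith
    refine supBelow_le (sub_nonneg.2 (self_le_transferMapInv hg p)) fun q hqp => ?_
    refine csSup_le ⟨_, self_mem_chainSums g q⟩ fun s hs => le_sub_iff_add_le.2 ?_
    refine le_csSup (bddAbove_chainSums hg p) (mem_chainSums_iff.2 (Or.inr ⟨q, hqp, ?_⟩))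
    rwa [add_sub_cancel_right]

theorem transferMap_transferMapInv (hg : g ∈ chainPolytope α) :
    transferMap α (transferMapInv α g) = g := by
  funext p
  rw [transferMap_eq_sub_supBelow, transferMapInv_eq_add_supBelow hg p]
  ring

theorem transferMapInv_mem_orderPolytope (hg : g ∈ chainPolytope α) :
    transferMapInv α g ∈ orderPolytope α := by
  refine ⟨fun p => ⟨transferMapInv_nonneg hg p, transferMapInv_le_one hg p⟩,
    fun p q hpq => ?_⟩
  rcases hpq.eq_or_lt with rfl | hlt
  · exact le_rfl
  · rw [transferMapInv_eq_add_supBelow hg q]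
    linarith [le_supBelow (transferMapInv α g) hlt, hg.1 q]

theorem transferMapInv_transferMap (hf : f ∈ orderPolytope α) :
    transferMapInv α (transferMap α f) = f :=
  transferMap_injective (transferMap_transferMapInv (transferMap_mem_chainPolytope hf))

theorem IsFracFn.transferMap {t : ℕ} (hf : IsFracFn α t f) :
    IsFracFn α t (transferMap α f) := by
  rw [isFracFn_iff_mem_zmultiples] at hf ⊢
  intro p
  rw [transferMap_eq_sub_supBelow]
  exact sub_mem (hf p) (supBelow_mem fun q _ => hf q)

theorem IsFracFn.transferMapInv {t : ℕ} (hg : g ∈ chainPolytope α) (hfr : IsFracFn α t g) :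
    IsFracFn α t (transferMapInv α g) := by
  rw [isFracFn_iff_mem_zmultiples] at hfr ⊢
  intro p
  induction p using WellFoundedLT.induction with
  | ind p ih =>
    rw [transferMapInv_eq_add_supBelow hg]
    exact add_mem (hfr p) (supBelow_mem ih)

/-- Stanley's transfer map is a bijection `O(P) → C(P)` with inverse given by maxima
of chain sums, and it restricts to a bijection on `(1/t)ℤ`-valued points for every
integer `t ≥ 1`. -/
theorem transferMap_bijOn (P : Type*) [PartialOrder P] [Fintype P] :
    Set.BijOn (transferMap P) (orderPolytope P) (chainPolytope P) ∧
    (∀ f ∈ orderPolytope P, transferMapInv P (transferMap P f) = f) ∧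
    (∀ f ∈ chainPolytope P, transferMap P (transferMapInv P f) = f) ∧
    ∀ t : ℕ, 1 ≤ t →
      Set.BijOn (transferMap P) (orderPolytope P ∩ {f | IsFracFn P t f})
        (chainPolytope P ∩ {f | IsFracFn P t f}) := by
  have hleft : ∀ f ∈ orderPolytope P, transferMapInv P (transferMap P f) = f :=
    fun f hf => transferMapInv_transferMap hf
  have hright : ∀ g ∈ chainPolytope P, transferMap P (transferMapInv P g) = g :=
    fun g hg => transferMap_transferMapInv hg
  refine ⟨Set.InvOn.bijOn ⟨hleft, hright⟩ (fun f hf => transferMap_mem_chainPolytope hf)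
      (fun g hg => transferMapInv_mem_orderPolytope hg), hleft, hright, fun t _ => ?_⟩
  refine Set.InvOn.bijOn ⟨fun f hf => hleft f hf.1, fun g hg => hright g hg.1⟩ ?_ ?_
  · rintro f ⟨hf, hfr⟩
    exact ⟨transferMap_mem_chainPolytope hf, hfr.transferMap⟩
  · rintro g ⟨hg, hfr⟩
    exact ⟨transferMapInv_mem_orderPolytope hg, hfr.transferMapInv hg⟩
end
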